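/- arXiv:2112.09324 — 7 statements merged into one kernel-verified Lean document; each statement's English description precedes it below -/
import Mathlib

section
/- Let f = x ⊕ y ⊕ z ⊕ 0 be the tropical polynomial max(x, y, z, 0) on ℝ³, and let g be a tropical polynomial in three variables. If C = V(f) ∩ V(g) is a weakly smooth tropical complete intersection curve, then the origin (0,0,0) does not lie in the tropical hypersurface V(g). -/
/-!
At the origin two distinct terms `t ≠ s` of `g` share the maximal coefficient `M`. The vertical
functional `(0, 0, 0, -M)` then selects all four vertices of `Newt f` on level `0` and both `t`
and `s` on level `1`, so its cell `A` contains the unimodular simplex spanned by `Newt f × {0}`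
and `(t, 1)`, of volume `1/24`, together with the point `(s, 1)` outside it. Hence `A` is a
full-dimensional mixed cell, and, being convex, it has volume strictly larger than the closed
simplex inside it, contradicting weak smoothness.
-/

/-- A tropical polynomial in three variables: a finite set of monomial exponents
together with real coefficients.  It represents
`g(x,y,z) = max over (a,b,c) ∈ support of (coeff (a,b,c) + a·x + b·y + c·z)`. -/
structure TropPoly3 where
  support : Finset (ℕ × ℕ × ℕ)
  coeff : ℕ × ℕ × ℕ → ℝ

namespace TropPoly3

/-- The value of the term with exponent `t` at the point `p`. -/
def val (g : TropPoly3) (t : ℕ × ℕ × ℕ) (p : ℝ × ℝ × ℝ) : ℝ :=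
  g.coeff t + (t.1 : ℝ) * p.1 + (t.2.1 : ℝ) * p.2.1 + (t.2.2 : ℝ) * p.2.2

/-- The tropical hypersurface `V(g)`: the locus where the maximum among the terms of
`g` is attained at least twice. -/
def tropV (g : TropPoly3) : Set (ℝ × ℝ × ℝ) :=
  {p | ∃ t ∈ g.support, ∃ s ∈ g.support, t ≠ s ∧ g.val t p = g.val s p ∧
        ∀ u ∈ g.support, g.val u p ≤ g.val t p}

/-- The point of the Cayley polytope in `ℝ⁴` associated to an exponent `t` on level `i`. -/
def emb (t : ℕ × ℕ × ℕ) (i : ℝ) : Fin 4 → ℝ :=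
  ![(t.1 : ℝ), (t.2.1 : ℝ), (t.2.2 : ℝ), i]

/-- The lifted value of the term `t` of a polynomial placed on level `lvl`, paired
against the linear functional `p` (regular-subdivision height selection). -/
def wlift (h : TropPoly3) (t : ℕ × ℕ × ℕ) (lvl : ℝ) (p : Fin 4 → ℝ) : ℝ :=
  h.coeff t + p 0 * (t.1 : ℝ) + p 1 * (t.2.1 : ℝ) + p 2 * (t.2.2 : ℝ) + p 3 * lvl

/-- `v` is the maximal lifted value among all terms of `f` (level 0) and `g` (level 1). -/
def IsMaxVal (f g : TropPoly3) (p : Fin 4 → ℝ) (v : ℝ) : Prop :=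
  (∀ s ∈ f.support, wlift f s 0 p ≤ v) ∧ (∀ s ∈ g.support, wlift g s 1 p ≤ v)

/-- The set of Cayley points selected by the functional `p`: those lifted points of the
Cayley polytope attaining the maximal `p`-value. -/
def cayleyPts (f g : TropPoly3) (p : Fin 4 → ℝ) : Set (Fin 4 → ℝ) :=
  {x | (∃ t ∈ f.support, x = emb t 0 ∧ IsMaxVal f g p (wlift f t 0 p)) ∨
       (∃ t ∈ g.support, x = emb t 1 ∧ IsMaxVal f g p (wlift g t 1 p))}

/-- A cell of the Cayley subdivision of `Cay(Newt f, Newt g)` associated to `f` and `g`. -/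
def IsCayleyCell (f g : TropPoly3) (A : Set (Fin 4 → ℝ)) : Prop :=
  ∃ p : Fin 4 → ℝ, A = convexHull ℝ (cayleyPts f g p)

/-- A mixed cell: its intersections with both levels `0` and `1` have dimension `≥ 1`. -/
def IsMixed (A : Set (Fin 4 → ℝ)) : Prop :=
  (∃ x ∈ A, ∃ y ∈ A, x ≠ y ∧ x 3 = 0 ∧ y 3 = 0) ∧
  (∃ x ∈ A, ∃ y ∈ A, x ≠ y ∧ x 3 = 1 ∧ y 3 = 1)

/-- `C = V(f) ∩ V(g)` is a weakly smooth tropical complete intersection curve: every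
`4`-dimensional mixed cell of the Cayley subdivision has the minimal volume `1/24`. -/
def WeaklySmoothCI (f g : TropPoly3) : Prop :=
  ∀ A : Set (Fin 4 → ℝ), IsCayleyCell f g A → affineSpan ℝ A = ⊤ → IsMixed A →
    MeasureTheory.volume A = ENNReal.ofReal (1 / 24)

/-- The tropical plane polynomial `f = x ⊕ y ⊕ z ⊕ 0 = max (x, y, z, 0)`. -/
def planePoly : TropPoly3 :=
  ⟨({(1, 0, 0), (0, 1, 0), (0, 0, 1), (0, 0, 0)} : Finset (ℕ × ℕ × ℕ)), fun _ => 0⟩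

end TropPoly3

open MeasureTheory Set

def cornerSimplex (n : ℕ) (r : ℝ) : Set (Fin n → ℝ) := {x | (∀ i, 0 ≤ x i) ∧ ∑ i, x i ≤ r}

lemma cornerSimplex_eq_empty {n : ℕ} {r : ℝ} (hr : r < 0) : cornerSimplex n r = ∅ :=
  eq_empty_of_forall_notMem fun _ ⟨h0, hs⟩ =>
    (Finset.sum_nonneg fun i _ => h0 i).trans hs |>.not_gt hr

lemma convex_cornerSimplex (n : ℕ) (r : ℝ) : Convex ℝ (cornerSimplex n r) := by
  simp only [cornerSimplex, ofPred_and, ofPred_forall]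
  refine (convex_iInter fun i => ?_).inter ?_
  · exact convex_halfSpace_ge (LinearMap.proj (R := ℝ) (φ := fun _ : Fin n => ℝ) i).isLinear 0
  · exact convex_halfSpace_le (f := fun x : Fin n → ℝ => ∑ i, x i)
      ⟨fun x y => by simp [Finset.sum_add_distrib], fun c x => by simp [Finset.mul_sum]⟩ r

lemma cornerSimplex_succ (n : ℕ) (r : ℝ) :
    cornerSimplex (n + 1) r = MeasurableEquiv.piFinSuccAbove (fun _ => ℝ) 0 ⁻¹'
      {q | 0 ≤ q.1 ∧ q.2 ∈ cornerSimplex n (r - q.1)} := by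
  ext x
  simp only [cornerSimplex, mem_preimage, mem_ofPred_eq, Fin.forall_fin_succ, Fin.sum_univ_succ,
    le_sub_iff_add_le', and_assoc]
  rfl

lemma volume_preimage_mk_cornerSimplex (n : ℕ) (r a : ℝ) :
    volume (Prod.mk a ⁻¹' {q : ℝ × (Fin n → ℝ) | 0 ≤ q.1 ∧ q.2 ∈ cornerSimplex n (r - q.1)}) =
      (Icc 0 r).indicator (fun a => volume (cornerSimplex n (r - a))) a := by
  by_cases ha : 0 ≤ a
  · by_cases har : a ≤ r
    · rw [indicator_of_mem (mem_Icc.2 ⟨ha, har⟩)]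
      simp [ha]
    · rw [indicator_of_notMem fun h => har h.2]
      simp [ha, cornerSimplex_eq_empty (sub_neg.2 (not_le.1 har))]
  · rw [indicator_of_notMem fun h => ha h.1]
    simp [ha]

lemma integral_sub_pow_div_factorial (n : ℕ) (r : ℝ) :
    ∫ a in (0 : ℝ)..r, (r - a) ^ n / n.factorial = r ^ (n + 1) / (n + 1).factorial := by
  rw [intervalIntegral.integral_div, intervalIntegral.integral_comp_sub_left (fun x => x ^ n),
    sub_self, sub_zero, integral_pow, Nat.factorial_succ]
  push_cast
  field_simp
  ring

theorem volume_cornerSimplex (n : ℕ) {r : ℝ} (hr : 0 ≤ r) :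
    volume (cornerSimplex n r) = ENNReal.ofReal (r ^ n / n.factorial) := by
  induction n generalizing r with
  | zero =>
    have : cornerSimplex 0 r = univ := by ext x; simp [cornerSimplex, hr]
    simp [this, volume_pi]
  | succ n ih =>
    have hB : MeasurableSet
        {q : ℝ × (Fin n → ℝ) | 0 ≤ q.1 ∧ q.2 ∈ cornerSimplex n (r - q.1)} := by
      refine IsClosed.measurableSet ?_
      change IsClosed {q : ℝ × (Fin n → ℝ) | 0 ≤ q.1 ∧ (∀ i, 0 ≤ q.2 i) ∧ ∑ i, q.2 i ≤ r - q.1}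
      simp only [ofPred_and, ofPred_forall]
      exact (isClosed_le continuous_const continuous_fst).inter
        ((isClosed_iInter fun i => isClosed_le continuous_const (by fun_prop)).inter
          (isClosed_le (by fun_prop) (by fun_prop)))
    have hmp : MeasurePreserving (MeasurableEquiv.piFinSuccAbove (fun _ : Fin (n + 1) => ℝ) 0)
        volume (volume.prod volume) :=
      measurePreserving_piFinSuccAbove (fun _ => volume) 0
    have hint : ∀ a ∈ Icc 0 r, volume (cornerSimplex n (r - a)) =
        ENNReal.ofReal ((r - a) ^ n / n.factorial) := fun a ha => ih (sub_nonneg.2 ha.2)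
    rw [cornerSimplex_succ, hmp.measure_preimage hB.nullMeasurableSet, Measure.prod_apply hB,
      lintegral_congr (volume_preimage_mk_cornerSimplex n r), lintegral_indicator measurableSet_Icc,
      setLIntegral_congr_fun measurableSet_Icc hint,
      ← ofReal_integral_eq_lintegral_ofReal (by fun_prop : Continuous _).integrableOn_Icc
        ((ae_restrict_mem measurableSet_Icc).mono fun a ha =>
          div_nonneg (pow_nonneg (sub_nonneg.2 ha.2) n) (by positivity)),
      integral_Icc_eq_integral_Ioc, ← intervalIntegral.integral_of_le hr,
      integral_sub_pow_div_factorial]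

lemma convexHull_insert_zero_range_single (n : ℕ) :
    convexHull ℝ (insert 0 (range fun i : Fin n => Pi.single i (1 : ℝ))) = cornerSimplex n 1 := by
  refine Subset.antisymm (convexHull_min ?_ (convex_cornerSimplex n 1)) fun x ⟨hx0, hx1⟩ => ?_
  · rintro _ (rfl | ⟨i, rfl⟩)
    · exact ⟨fun _ => le_rfl, by simp⟩
    · exact ⟨fun j => by by_cases h : j = i <;> simp [h], by simp⟩
  -- `x` is the convex combination of the vertices with weights `x i` and `1 - ∑ i, x i` on `0`.
  let w : Option (Fin n) → ℝ := fun o => o.elim (1 - ∑ i, x i) x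
  let z : Option (Fin n) → Fin n → ℝ := fun o => o.elim 0 fun i => Pi.single i 1
  have hx : x = ∑ o, w o • z o := by
    simpa [Fintype.sum_option, w, z] using pi_eq_sum_univ' x
  rw [hx]
  refine (convex_convexHull ℝ _).sum_mem (fun o _ => ?_) (by simp [Fintype.sum_option, w])
    fun o _ => subset_convexHull ℝ _ ?_
  · cases o
    exacts [sub_nonneg.2 hx1, hx0 _]
  · cases o
    exacts [mem_insert _ _, mem_insert_of_mem _ (mem_range_self _)]

theorem volume_convexHull_insert_zero_range {n : ℕ} (v : Fin n → Fin n → ℝ) :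
    volume (convexHull ℝ (insert 0 (range v))) =
      ENNReal.ofReal (|(Matrix.of v).det| / n.factorial) := by
  let L := Matrix.toLin' (Matrix.of v).transpose
  have hv : insert 0 (range v) = L '' insert 0 (range fun i : Fin n => Pi.single i (1 : ℝ)) := by
    rw [image_insert_eq, map_zero, ← range_comp]
    congr 2
    ext i k
    simp [L, Matrix.toLin'_apply]
  rw [hv, ← LinearMap.image_convexHull, Measure.addHaar_image_linearMap, LinearMap.det_toLin',
    Matrix.det_transpose, convexHull_insert_zero_range_single, volume_cornerSimplex n zero_le_one,
    ← ENNReal.ofReal_mul (abs_nonneg _), one_pow, mul_one_div]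

section Measure

variable {E : Type*} [NormedAddCommGroup E] [NormedSpace ℝ E] [MeasurableSpace E] [BorelSpace E]

lemma affineSpan_eq_top_of_addHaar_pos [FiniteDimensional ℝ E] (μ : Measure E)
    [μ.IsAddHaarMeasure] {s : Set E} (hs : 0 < μ s) : affineSpan ℝ s = ⊤ := by
  by_contra h
  exact hs.ne' (measure_mono_null (subset_affineSpan ℝ s) (Measure.addHaar_affineSubspace μ _ h))

/-- The point `a` is a limit of interior points of `A`, so `interior A \ S` is a nonempty open
set. -/
lemma Convex.measure_lt_of_isClosed_subset (μ : Measure E) [μ.IsOpenPosMeasure] {A S : Set E}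
    (hA : Convex ℝ A) (hA' : (interior A).Nonempty) (hS : IsClosed S) (hSA : S ⊆ A)
    (hμS : μ S ≠ ⊤) {a : E} (ha : a ∈ A) (haS : a ∉ S) : μ S < μ A := by
  have ha' : a ∈ closure (interior A) := by
    rw [hA.closure_interior_eq_closure_of_nonempty_interior hA']
    exact subset_closure ha
  have hU : (interior A \ S).Nonempty := by
    obtain ⟨y, hyS, hyA⟩ := mem_closure_iff.1 ha' Sᶜ hS.isOpen_compl haS
    exact ⟨y, hyA, hyS⟩
  calc μ S < μ S + μ (interior A \ S) :=
        ENNReal.lt_add_right hμS (isOpen_interior.sdiff hS |>.measure_pos μ hU).ne'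
    _ = μ (S ∪ (interior A \ S)) :=
        (measure_union disjoint_sdiff_right (isOpen_interior.sdiff hS).measurableSet).symm
    _ ≤ μ A := measure_mono (union_subset hSA (sdiff_subset.trans interior_subset))

end Measure

lemma eq_of_mem_convexHull_insert {F : Type*} [AddCommGroup F] [Module ℝ F] (f : F →ₗ[ℝ] ℝ)
    {s : Set F} {x y : F} (hs : ∀ z ∈ s, f z = 0) (hx : f x = 1)
    (hy : y ∈ convexHull ℝ (insert x s)) (hfy : f y = 1) : y = x := by
  rcases s.eq_empty_or_nonempty with rfl | hne
  · simpa using hy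
  rw [convexHull_insert hne, mem_convexJoin] at hy
  obtain ⟨_, rfl, z, hz, a, b, -, hb, hab, rfl⟩ := hy
  have hfz : f z = 0 := convexHull_min hs (LinearMap.ker f).convex hz
  have ha : a = 1 := by simpa [hx, hfz] using hfy
  obtain rfl : b = 0 := by linarith
  simp [ha]

namespace TropPoly3

@[simp]
lemma val_zero (g : TropPoly3) (t : ℕ × ℕ × ℕ) :
    g.val t ((0 : ℝ), (0 : ℝ), (0 : ℝ)) = g.coeff t := by
  simp [val]

lemma emb_zero_zero : emb (0, 0, 0) 0 = 0 := by
  ext k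
  fin_cases k <;> simp [emb]

lemma emb_injective (i : ℝ) : Function.Injective fun t => emb t i := by
  intro s t h
  have h0 := congrFun h 0
  have h1 := congrFun h 1
  have h2 := congrFun h 2
  simp only [emb, Matrix.cons_val, Nat.cast_inj] at h0 h1 h2
  exact Prod.ext h0 (Prod.ext h1 h2)

lemma wlift_vertical (h : TropPoly3) (t : ℕ × ℕ × ℕ) (lvl c : ℝ) :
    wlift h t lvl ![0, 0, 0, c] = h.coeff t + c * lvl := by
  simp [wlift]

lemma isMaxVal_vertical {g : TropPoly3} {M : ℝ} (hM : ∀ u ∈ g.support, g.coeff u ≤ M) :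
    IsMaxVal planePoly g ![0, 0, 0, -M] 0 :=
  ⟨fun u _ => by simp [wlift_vertical, planePoly],
    fun u hu => by simpa [wlift_vertical] using hM u hu⟩

lemma emb_mem_cayleyPts_planePoly {g : TropPoly3} {M : ℝ} (hM : ∀ u ∈ g.support, g.coeff u ≤ M)
    {u : ℕ × ℕ × ℕ} (hu : u ∈ planePoly.support) :
    emb u 0 ∈ cayleyPts planePoly g ![0, 0, 0, -M] :=
  Or.inl ⟨u, hu, rfl, by simpa [wlift_vertical, planePoly] using isMaxVal_vertical hM⟩

lemma emb_mem_cayleyPts_of_coeff_eq {g : TropPoly3} {M : ℝ}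
    (hM : ∀ u ∈ g.support, g.coeff u ≤ M) {u : ℕ × ℕ × ℕ} (hu : u ∈ g.support)
    (huM : g.coeff u = M) : emb u 1 ∈ cayleyPts planePoly g ![0, 0, 0, -M] :=
  Or.inr ⟨u, hu, rfl, by simpa [wlift_vertical, huM] using isMaxVal_vertical hM⟩

/-- The simplex of the Cayley polytope spanned by `Newt f × {0}` and `(t, 1)`. -/
def apexSimplex (t : ℕ × ℕ × ℕ) : Set (Fin 4 → ℝ) :=
  convexHull ℝ (insert 0 (range ![emb (1, 0, 0) 0, emb (0, 1, 0) 0, emb (0, 0, 1) 0, emb t 1]))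

lemma volume_apexSimplex (t : ℕ × ℕ × ℕ) : volume (apexSimplex t) = ENNReal.ofReal (1 / 24) := by
  have hdet : (Matrix.of
      ![emb (1, 0, 0) 0, emb (0, 1, 0) 0, emb (0, 0, 1) 0, emb t 1]).det = 1 := by
    simp [Matrix.det_succ_row_zero, Fin.sum_univ_succ, emb]
  rw [apexSimplex, volume_convexHull_insert_zero_range, hdet]
  norm_num [Nat.factorial]

lemma isClosed_apexSimplex (t : ℕ × ℕ × ℕ) : IsClosed (apexSimplex t) :=
  ((finite_range _).insert 0).isClosed_convexHull ℝ

lemma eq_of_emb_mem_apexSimplex {s t : ℕ × ℕ × ℕ} (h : emb s 1 ∈ apexSimplex t) : s = t := by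
  have hverts : insert 0 (range ![emb (1, 0, 0) 0, emb (0, 1, 0) 0, emb (0, 0, 1) 0, emb t 1]) =
      insert (emb t 1) {0, emb (1, 0, 0) 0, emb (0, 1, 0) 0, emb (0, 0, 1) 0} := by
    ext
    simp only [Matrix.range_cons, Matrix.range_empty, union_empty, singleton_union,
      mem_insert_iff, mem_singleton_iff]
    tauto
  rw [apexSimplex, hverts] at h
  refine emb_injective 1 (eq_of_mem_convexHull_insert (LinearMap.proj 3) ?_ rfl h rfl)
  rintro _ (rfl | rfl | rfl | rfl) <;> rfl

lemma apexSimplex_subset_convexHull_cayleyPts {g : TropPoly3} {M : ℝ}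
    (hM : ∀ u ∈ g.support, g.coeff u ≤ M) {t : ℕ × ℕ × ℕ} (ht : t ∈ g.support)
    (htM : g.coeff t = M) :
    apexSimplex t ⊆ convexHull ℝ (cayleyPts planePoly g ![0, 0, 0, -M]) := by
  refine convexHull_mono ?_
  simp only [Matrix.range_cons, Matrix.range_empty, union_empty, singleton_union,
    insert_subset_iff, singleton_subset_iff]
  refine ⟨emb_zero_zero ▸ ?_, ?_, ?_, ?_, emb_mem_cayleyPts_of_coeff_eq hM ht htM⟩ <;>
    exact emb_mem_cayleyPts_planePoly hM (by decide)

lemma isMixed_of_apexSimplex_subset {A : Set (Fin 4 → ℝ)} {s t : ℕ × ℕ × ℕ}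
    (hA : apexSimplex t ⊆ A) (hs : emb s 1 ∈ A) (hst : s ≠ t) : IsMixed A := by
  have hvert : ∀ x ∈ insert 0 (range
      ![emb (1, 0, 0) 0, emb (0, 1, 0) 0, emb (0, 0, 1) 0, emb t 1]), x ∈ A :=
    fun x hx => hA (subset_convexHull ℝ _ hx)
  refine ⟨⟨0, hvert _ (mem_insert _ _), emb (1, 0, 0) 0, hvert _ ?_, ?_, rfl, rfl⟩,
    ⟨emb t 1, hvert _ ?_, emb s 1, hs, fun h => hst (emb_injective 1 h).symm, rfl, rfl⟩⟩
  · exact mem_insert_of_mem _ ⟨0, rfl⟩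
  · intro h
    simpa [emb] using congrFun h 0
  · exact mem_insert_of_mem _ ⟨3, rfl⟩

end TropPoly3

open TropPoly3 in
/-- Lemma 4.2 of the paper: if `f = x ⊕ y ⊕ z ⊕ 0` and
`C = V(f) ∩ V(g)` is a weakly smooth tropical complete intersection curve, then the
origin does not lie on the tropical hypersurface `V(g)`. -/
theorem origin_not_in_tropV (g : TropPoly3) (hws : WeaklySmoothCI planePoly g) :
    ((0 : ℝ), (0 : ℝ), (0 : ℝ)) ∉ tropV g := by
  rintro ⟨t, ht, s, hs, hts, hst, hmax⟩
  simp only [val_zero] at hst hmax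
  set A := convexHull ℝ (cayleyPts planePoly g ![0, 0, 0, -g.coeff t])
  have hSA : apexSimplex t ⊆ A := apexSimplex_subset_convexHull_cayleyPts hmax ht rfl
  have hsA : emb s 1 ∈ A :=
    subset_convexHull ℝ _ (emb_mem_cayleyPts_of_coeff_eq hmax hs hst.symm)
  have hspan : affineSpan ℝ A = ⊤ := by
    refine affineSpan_eq_top_of_addHaar_pos volume (lt_of_lt_of_le ?_ (measure_mono hSA))
    simp [volume_apexSimplex]
  have hlt : volume (apexSimplex t) < volume A :=
    (convex_convexHull ℝ _).measure_lt_of_isClosed_subset volume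
      ((convex_convexHull ℝ _).interior_nonempty_iff_affineSpan_eq_top.2 hspan)
      (isClosed_apexSimplex t) hSA (by simp [volume_apexSimplex]) hsA
      fun h => hts (eq_of_emb_mem_apexSimplex h).symm
  rw [volume_apexSimplex, hws A ⟨_, rfl⟩ hspan (isMixed_of_apexSimplex_subset hSA hsA hts.symm)]
    at hlt
  exact hlt.false
end

section
/- Let u : [0, a₀] → ℝ and r : [0, b₀] → ℝ be piecewise linear functions interpolating lattice points (i, u(i)) for integers 0 ≤ i ≤ a₀ and (r(j), j) for integers 0 ≤ j ≤ b₀, with u(a₀) = b₀ and r(b₀) = a₀. Suppose for all integers i, j in range: (r(j) ≤ i → j ≤ u(i)), (u(i) ≤ j → i ≤ r(j)), (r(j) ≤ i ∧ u(i) = j → (r(j), j) = (i, u(i))), and (u(i) ≤ j ∧ r(j) = i → (r(j), j) = (i, u(i))). Define U = {(x, y) : 0 ≤ x ≤ a₀, y > u(x)} and R = {(x, y) : 0 ≤ y ≤ b₀, x > r(y)}, and assume consecutive-lattice-point edges of the two graphs intersect only when equal or sharing an endpoint. Then U ∩ R = ∅. -/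
set_option maxHeartbeats 1000000


/-- Lemma 4.11 of the paper: the region `U` above the piecewise linear graph of `u`
(interpolating lattice points `(i, u(i))`, `0 ≤ i ≤ a₀`) and the region `R` to the right
of the piecewise linear graph of `r` (interpolating lattice points `(r(j), j)`,
`0 ≤ j ≤ b₀`) are disjoint, under the compatibility conditions of Lemma 4.10 and the
hypothesis that consecutive-lattice-point edges of the two graphs intersect only when
they are equal or share an endpoint. -/
theorem upper_region_disjoint_right_region (a₀ b₀ : ℕ) (u r : ℝ → ℝ)
    -- `u` and `r` are piecewise linear, interpolating between consecutive integers
    (hu_lin : ∀ i : ℕ, i < a₀ → ∀ x : ℝ, (i : ℝ) ≤ x → x ≤ (i : ℝ) + 1 →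
      u x = u i + (x - (i : ℝ)) * (u ((i : ℝ) + 1) - u i))
    (hr_lin : ∀ j : ℕ, j < b₀ → ∀ y : ℝ, (j : ℝ) ≤ y → y ≤ (j : ℝ) + 1 →
      r y = r j + (y - (j : ℝ)) * (r ((j : ℝ) + 1) - r j))
    -- the interpolated points are lattice points
    (hu_lat : ∀ i : ℕ, i ≤ a₀ → ∃ k : ℤ, u i = (k : ℝ))
    (hr_lat : ∀ j : ℕ, j ≤ b₀ → ∃ k : ℤ, r j = (k : ℝ))
    (hub : u (a₀ : ℝ) = (b₀ : ℝ)) (hra : r (b₀ : ℝ) = (a₀ : ℝ))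
    -- the four compatibility implications of Lemma 4.10
    (h1 : ∀ i j : ℕ, i ≤ a₀ → j ≤ b₀ → r j ≤ (i : ℝ) → (j : ℝ) ≤ u i)
    (h2 : ∀ i j : ℕ, i ≤ a₀ → j ≤ b₀ → u i ≤ (j : ℝ) → (i : ℝ) ≤ r j)
    (h3 : ∀ i j : ℕ, i ≤ a₀ → j ≤ b₀ → r j ≤ (i : ℝ) → u i = (j : ℝ) →
      r j = (i : ℝ) ∧ (j : ℝ) = u i)
    (h4 : ∀ i j : ℕ, i ≤ a₀ → j ≤ b₀ → u i ≤ (j : ℝ) → r j = (i : ℝ) →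
      r j = (i : ℝ) ∧ (j : ℝ) = u i)
    -- consecutive-lattice-point edges of the two graphs intersect only when equal
    -- or sharing one of the endpoints
    (hedge : ∀ i j : ℕ, i < a₀ → j < b₀ →
      (segment ℝ (((i : ℝ), u i) : ℝ × ℝ) (((i : ℝ) + 1, u ((i : ℝ) + 1)) : ℝ × ℝ) ∩
        segment ℝ ((r j, (j : ℝ)) : ℝ × ℝ) ((r ((j : ℝ) + 1), (j : ℝ) + 1) : ℝ × ℝ)).Nonempty →
      segment ℝ (((i : ℝ), u i) : ℝ × ℝ) (((i : ℝ) + 1, u ((i : ℝ) + 1)) : ℝ × ℝ) =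
          segment ℝ ((r j, (j : ℝ)) : ℝ × ℝ) ((r ((j : ℝ) + 1), (j : ℝ) + 1) : ℝ × ℝ) ∨
        (((i : ℝ), u i) : ℝ × ℝ) = ((r j, (j : ℝ)) : ℝ × ℝ) ∨
        (((i : ℝ), u i) : ℝ × ℝ) = ((r ((j : ℝ) + 1), (j : ℝ) + 1) : ℝ × ℝ) ∨
        (((i : ℝ) + 1, u ((i : ℝ) + 1)) : ℝ × ℝ) = ((r j, (j : ℝ)) : ℝ × ℝ) ∨
        (((i : ℝ) + 1, u ((i : ℝ) + 1)) : ℝ × ℝ) = ((r ((j : ℝ) + 1), (j : ℝ) + 1) : ℝ × ℝ)) :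
    {p : ℝ × ℝ | 0 ≤ p.1 ∧ p.1 ≤ (a₀ : ℝ) ∧ u p.1 < p.2} ∩
      {p : ℝ × ℝ | 0 ≤ p.2 ∧ p.2 ≤ (b₀ : ℝ) ∧ r p.2 < p.1} = ∅ := by
  clear hedge h1 h3
  apply Set.eq_empty_iff_forall_notMem.mpr
  rintro ⟨x, y⟩ ⟨⟨hx0, hxa, hyu⟩, hy0, hyb, hxr⟩
  dsimp only at hx0 hxa hyu hy0 hyb hxr
  -- boundary cases
  rcases eq_or_lt_of_le hxa with hxa' | hxa'
  · rw [hxa', hub] at hyu; exact absurd hyb (not_le.mpr hyu)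
  rcases eq_or_lt_of_le hyb with hyb' | hyb'
  · rw [hyb', hra] at hxr; exact absurd hxa (not_le.mpr hxr)
  -- set up the cell containing (x, y)
  set i : ℕ := ⌊x⌋₊ with hidef
  set j : ℕ := ⌊y⌋₊ with hjdef
  have hia : i < a₀ := (Nat.floor_lt hx0).mpr hxa'
  have hjb : j < b₀ := (Nat.floor_lt hy0).mpr hyb'
  have hi1 : (i : ℝ) ≤ x := Nat.floor_le hx0
  have hi2 : x < (i : ℝ) + 1 := Nat.lt_floor_add_one x
  have hj1 : (j : ℝ) ≤ y := Nat.floor_le hy0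
  have hj2 : y < (j : ℝ) + 1 := Nat.lt_floor_add_one y
  -- lattice values at the corners
  obtain ⟨ka, hka⟩ := hu_lat i hia.le
  obtain ⟨kb, hkb⟩ := hu_lat (i + 1) hia
  obtain ⟨kc, hkc⟩ := hr_lat j hjb.le
  obtain ⟨kd, hkd⟩ := hr_lat (j + 1) hjb
  have hkb' : u ((i : ℝ) + 1) = (kb : ℝ) := by push_cast at hkb; exact hkb
  have hkd' : r ((j : ℝ) + 1) = (kd : ℝ) := by push_cast at hkd; exact hkd
  have hux : u x = (ka : ℝ) + (x - (i : ℝ)) * ((kb : ℝ) - (ka : ℝ)) := by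
    rw [hu_lin i hia x hi1 hi2.le, hka, hkb']
  have hry : r y = (kc : ℝ) + (y - (j : ℝ)) * ((kd : ℝ) - (kc : ℝ)) := by
    rw [hr_lin j hjb y hj1 hj2.le, hkc, hkd']
  rw [hux] at hyu
  rw [hry] at hxr
  -- one of u(i), u(i+1) is ≤ j
  have hminu : (ka : ℤ) ≤ (j : ℤ) ∨ (kb : ℤ) ≤ (j : ℤ) := by
    by_contra h
    push_neg at h
    obtain ⟨ha', hb'⟩ := h
    have ha : (j : ℝ) + 1 ≤ (ka : ℝ) := by exact_mod_cast Int.add_one_le_iff.mpr ha'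
    have hb : (j : ℝ) + 1 ≤ (kb : ℝ) := by exact_mod_cast Int.add_one_le_iff.mpr hb'
    nlinarith [mul_nonneg (by linarith : (0:ℝ) ≤ x - (i:ℝ))
        (by linarith : (0:ℝ) ≤ (kb : ℝ) - ((j:ℝ) + 1)),
      mul_nonneg (by linarith : (0:ℝ) ≤ (i:ℝ) + 1 - x)
        (by linarith : (0:ℝ) ≤ (ka : ℝ) - ((j:ℝ) + 1))]
  rcases hminu with hkaj | hkbj
  case inr =>
    -- u(i+1) ≤ j : then r(j) ≥ i+1 and r(j+1) ≥ i+1, contradicting r(y) < x < i+1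
    have hkbjR : (kb : ℝ) ≤ (j : ℝ) := by exact_mod_cast hkbj
    have hc : (i : ℝ) + 1 ≤ (kc : ℝ) := by
      have := h2 (i + 1) j hia hjb.le (by rw [hkb]; push_cast; exact hkbjR)
      rw [hkc] at this; push_cast at this; linarith
    have hd : (i : ℝ) + 1 ≤ (kd : ℝ) := by
      have := h2 (i + 1) (j + 1) hia hjb (by rw [hkb]; push_cast; linarith)
      rw [hkd] at this; push_cast at this; linarith
    nlinarith [mul_nonneg (by linarith : (0:ℝ) ≤ y - (j:ℝ))
        (by linarith : (0:ℝ) ≤ (kd : ℝ) - ((i:ℝ) + 1)),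
      mul_nonneg (by linarith : (0:ℝ) ≤ (j:ℝ) + 1 - y)
        (by linarith : (0:ℝ) ≤ (kc : ℝ) - ((i:ℝ) + 1))]
  case inl =>
    -- u(i) ≤ j
    have hkajR : (ka : ℝ) ≤ (j : ℝ) := by exact_mod_cast hkaj
    have hc0 : (i : ℝ) ≤ (kc : ℝ) := by
      have := h2 i j hia.le hjb.le (by rw [hka]; exact hkajR)
      rwa [hkc] at this
    have hd0 : (i : ℝ) ≤ (kd : ℝ) := by
      have := h2 i (j + 1) hia.le hjb (by rw [hka]; push_cast; linarith)
      rw [hkd] at this; push_cast at this; linarith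
    -- one of r(j), r(j+1) is ≤ i
    have hminr : (kc : ℤ) ≤ (i : ℤ) ∨ (kd : ℤ) ≤ (i : ℤ) := by
      by_contra h
      push_neg at h
      obtain ⟨hc', hd'⟩ := h
      have hc : (i : ℝ) + 1 ≤ (kc : ℝ) := by exact_mod_cast Int.add_one_le_iff.mpr hc'
      have hd : (i : ℝ) + 1 ≤ (kd : ℝ) := by exact_mod_cast Int.add_one_le_iff.mpr hd'
      nlinarith [mul_nonneg (by linarith : (0:ℝ) ≤ y - (j:ℝ))
          (by linarith : (0:ℝ) ≤ (kd : ℝ) - ((i:ℝ) + 1)),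
        mul_nonneg (by linarith : (0:ℝ) ≤ (j:ℝ) + 1 - y)
          (by linarith : (0:ℝ) ≤ (kc : ℝ) - ((i:ℝ) + 1))]
    have hc0' : (i : ℤ) ≤ kc := by exact_mod_cast hc0
    have hd0' : (i : ℤ) ≤ kd := by exact_mod_cast hd0
    -- r(j+1) = i would force u(i) = j+1, contradicting u(i) ≤ j; so r(j+1) ≥ i+1
    have hkdi2 : (i : ℤ) + 1 ≤ kd := by
      by_contra hcon
      push_neg at hcon
      have hkdi' : (kd : ℤ) = (i : ℤ) := le_antisymm (Int.lt_add_one_iff.mp hcon) hd0'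
      have hrji : r ((j + 1 : ℕ) : ℝ) = ((i : ℕ) : ℝ) := by
        rw [hkd]; exact_mod_cast hkdi'
      have hcc := (h4 i (j + 1) hia.le hjb (by rw [hka]; push_cast; linarith) hrji).2
      rw [hka] at hcc
      have : ((j : ℤ) + 1 : ℤ) = ka := by exact_mod_cast hcc
      omega
    -- hence r(j) = i, and then u(i) = j, u(i+1) ≥ j+1
    have hkci : (kc : ℤ) ≤ (i : ℤ) := by omega
    have hkci' : (kc : ℤ) = (i : ℤ) := le_antisymm hkci hc0'
    have hkciR : (kc : ℝ) = (i : ℝ) := by exact_mod_cast hkci'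
    have hrji : r ((j : ℕ) : ℝ) = ((i : ℕ) : ℝ) := by rw [hkc]; exact hkciR
    have hkaeq := (h4 i j hia.le hjb.le (by rw [hka]; exact hkajR) hrji).2
    rw [hka] at hkaeq
    have hkaR : (ka : ℝ) = (j : ℝ) := hkaeq.symm
    have hkbj' : (j : ℤ) + 1 ≤ kb := by
      by_contra h
      push_neg at h
      have hkbR : (kb : ℝ) ≤ (j : ℝ) := by exact_mod_cast Int.lt_add_one_iff.mp h
      have := h2 (i + 1) j hia hjb.le (by rw [hkb]; push_cast; exact hkbR)
      rw [hkc] at this; push_cast at this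
      rw [hkciR] at this; linarith
    have hkbR : (j : ℝ) + 1 ≤ (kb : ℝ) := by exact_mod_cast hkbj'
    have hkdR : (i : ℝ) + 1 ≤ (kd : ℝ) := by exact_mod_cast hkdi2
    -- now x - i < y - j and y - j < x - i : contradiction
    nlinarith [mul_nonneg (by linarith : (0:ℝ) ≤ x - (i:ℝ))
        (by linarith : (0:ℝ) ≤ (kb : ℝ) - (ka : ℝ) - 1),
      mul_nonneg (by linarith : (0:ℝ) ≤ y - (j:ℝ))
        (by linarith : (0:ℝ) ≤ (kd : ℝ) - (kc : ℝ) - 1)]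
end

section
/- Let C be a finite trivalent graph with Euler characteristic e(C) = −2 (equivalently, genus 3 when connected), and let C′ = C ∖ P where P is a set of 4 points, each lying in the interior of an edge of C and each used as a gluing point where C is trivalent. Let C̄′ denote the graph obtained by adding a vertex to each open edge end of C′. If s is the number of connected components of C′ and t is the first Betti number of C̄′, then s − t = 6; in particular, since 0 ≤ t ≤ 3, the pair (s, t) is one of (6, 0), (7, 1), (8, 2), (9, 3). -/
/-- A finite multigraph with (arbitrarily) oriented edges; loops and parallel
edges are allowed.  `ends e` records the two endpoints of the edge `e`. -/
structure OMGraph where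
  V : Type
  E : Type
  [fintypeV : Fintype V]
  [fintypeE : Fintype E]
  [decEqV : DecidableEq V]
  [decEqE : DecidableEq E]
  ends : E → V × V

attribute [instance] OMGraph.fintypeV OMGraph.fintypeE OMGraph.decEqV OMGraph.decEqE

namespace OMGraph

/-- The degree of a vertex (a loop counts twice). -/
def deg (G : OMGraph) (v : G.V) : ℕ :=
  (Finset.univ.filter fun e : G.E => (G.ends e).1 = v).card +
  (Finset.univ.filter fun e : G.E => (G.ends e).2 = v).card

/-- A graph is trivalent when every vertex has degree `3`. -/
def Trivalent (G : OMGraph) : Prop := ∀ v, G.deg v = 3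

/-- Genus (first Betti number, for a connected graph) equal to `3`:  `E − V + 1 = 3`. -/
def GenusThree (G : OMGraph) : Prop :=
  (Fintype.card G.E : ℤ) - (Fintype.card G.V : ℤ) + 1 = 3

/-- Indicator vector of a set of edges, over `ℤ/2`. -/
def indicator (G : OMGraph) (S : Finset G.E) : G.E → ZMod 2 :=
  fun e => if e ∈ S then 1 else 0

/-- The mod-2 boundary map on edge chains. -/
def bnd (G : OMGraph) (f : G.E → ZMod 2) : G.V → ZMod 2 := fun v =>
  ∑ e : G.E, f e *
    ((if (G.ends e).1 = v then 1 else 0) + (if (G.ends e).2 = v then 1 else 0))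

/-- An edge set is a cycle set (element of the cycle space) when its
indicator has zero mod-2 boundary. -/
def IsCycleSet (G : OMGraph) (S : Finset G.E) : Prop :=
  G.bnd (G.indicator S) = 0

/-- A circuit: a minimal nonempty cycle set, i.e. a subgraph homeomorphic to `S¹`. -/
def IsCircuit (G : OMGraph) (S : Finset G.E) : Prop :=
  S.Nonempty ∧ G.IsCycleSet S ∧
    ∀ T ⊆ S, T.Nonempty → G.IsCycleSet T → T = S

/-- The vertex support of an edge set. -/
def verts (G : OMGraph) (S : Finset G.E) : Finset G.V :=
  S.image (fun e => (G.ends e).1) ∪ S.image (fun e => (G.ends e).2)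

/-- Adjacency of vertices. -/
def Adj (G : OMGraph) (u v : G.V) : Prop :=
  ∃ e, G.ends e = (u, v) ∨ G.ends e = (v, u)

/-- Connectedness. -/
def Connected (G : OMGraph) : Prop :=
  ∀ u v, Relation.ReflTransGen G.Adj u v

/-- Isomorphism of multigraphs (orientations of edges are irrelevant). -/
def Iso (G H : OMGraph) : Prop :=
  ∃ (φ : G.V ≃ H.V) (ψ : G.E ≃ H.E), ∀ e,
    H.ends (ψ e) = (φ (G.ends e).1, φ (G.ends e).2) ∨
    H.ends (ψ e) = (φ (G.ends e).2, φ (G.ends e).1)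

/-- The lollipop graph of genus 3: a central vertex `0` joined by bridge edges to
three vertices `1, 2, 3`, each of which carries a loop. -/
def lollipop : OMGraph where
  V := Fin 4
  E := Fin 6
  ends := fun e =>
    if h : (e : ℕ) < 3 then
      ((0 : Fin 4), (⟨(e : ℕ) + 1, by omega⟩ : Fin 4))
    else
      ((⟨(e : ℕ) - 2, by have := e.isLt; omega⟩ : Fin 4),
       (⟨(e : ℕ) - 2, by have := e.isLt; omega⟩ : Fin 4))

/-- The homology classes of `C₁, C₂, C₃` generate `H₁(G)` (the mod-2 cycle space). -/
def SpansCycleSpace (G : OMGraph) (C₁ C₂ C₃ : Finset G.E) : Prop :=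
  ∀ f : G.E → ZMod 2, G.bnd f = 0 →
    f ∈ Submodule.span (ZMod 2)
      ({G.indicator C₁, G.indicator C₂, G.indicator C₃} : Set (G.E → ZMod 2))

/-- Homological independence of three cycles. -/
def HomIndep (G : OMGraph) (C₁ C₂ C₃ : Finset G.E) : Prop :=
  LinearIndependent (ZMod 2) ![G.indicator C₁, G.indicator C₂, G.indicator C₃]

end OMGraph

namespace OMGraph

/-- The endpoint of an edge on side `b`. -/
def endAt (G : OMGraph) (e : G.E) (b : Bool) : G.V :=
  if b then (G.ends e).2 else (G.ends e).1

/-- Cutting a graph at a set `P` of vertices: each vertex `p ∈ P` is removed and each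
edge-end formerly incident to `p` is given its own new (valence-one) vertex.  This is
the graph `C̄′` obtained from `C ∖ P` by adding a vertex to each open edge end. -/
def cut (G : OMGraph) (P : Finset G.V) : OMGraph where
  V := {v : G.V // v ∉ P} ⊕ {x : G.E × Bool // G.endAt x.1 x.2 ∈ P}
  E := G.E
  ends := fun e =>
    ((if h : G.endAt e false ∈ P then Sum.inr ⟨(e, false), h⟩
        else Sum.inl ⟨G.endAt e false, h⟩),
     (if h : G.endAt e true ∈ P then Sum.inr ⟨(e, true), h⟩
        else Sum.inl ⟨G.endAt e true, h⟩))

/-- The number of connected components of a graph. -/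
noncomputable def ncomp (G : OMGraph) : ℕ := Nat.card (Quot G.Adj)

end OMGraph

/-!
Cutting at a vertex of degree `d` replaces it by `d` new vertices and keeps every edge, so
`V − E` grows by `d − 1`. At four trivalent points this takes `V − E` from `−2` to `6`, and
for any graph `V − E = s − t` by the definition of the first Betti number.
-/

namespace OMGraph

variable (G : OMGraph)

theorem card_cut_E (P : Finset G.V) : Fintype.card (G.cut P).E = Fintype.card G.E := rfl

theorem card_filter_endAt_eq_deg (v : G.V) :
    (Finset.univ.filter fun x : G.E × Bool => G.endAt x.1 x.2 = v).card = G.deg v := by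
  rw [Finset.card_filter, Fintype.sum_prod_type]
  simp only [Fintype.sum_bool, endAt, if_true, Bool.false_eq_true, if_false,
    Finset.sum_add_distrib, deg, Finset.card_filter]
  ring

theorem card_endAt_mem_eq_sum_deg (P : Finset G.V) :
    Fintype.card {x : G.E × Bool // G.endAt x.1 x.2 ∈ P} = ∑ p ∈ P, G.deg p := by
  rw [Fintype.card_subtype, ← Finset.sum_card_fiberwise_eq_card_filter]
  exact Finset.sum_congr rfl fun p _ => G.card_filter_endAt_eq_deg p

theorem card_cut_V_add_card (P : Finset G.V) :
    Fintype.card (G.cut P).V + P.card = Fintype.card G.V + ∑ p ∈ P, G.deg p := by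
  have hkept : Fintype.card {v : G.V // v ∉ P} + P.card = Fintype.card G.V := by
    rw [Fintype.card_subtype_compl, Fintype.card_coe]
    have := Finset.card_le_univ P
    omega
  change Fintype.card ({v : G.V // v ∉ P} ⊕ {x : G.E × Bool // G.endAt x.1 x.2 ∈ P}) + _ = _
  rw [Fintype.card_sum, card_endAt_mem_eq_sum_deg]
  omega

theorem euler_cut (P : Finset G.V) :
    (Fintype.card (G.cut P).V : ℤ) - Fintype.card (G.cut P).E
      = (Fintype.card G.V : ℤ) - Fintype.card G.E + ∑ p ∈ P, ((G.deg p : ℤ) - 1) := by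
  have h := congrArg (Nat.cast : ℕ → ℤ) (G.card_cut_V_add_card P)
  push_cast at h
  rw [Finset.sum_sub_distrib, Finset.sum_const, nsmul_one, card_cut_E]
  linarith

theorem Trivalent.euler_cut {G : OMGraph} (hG : G.Trivalent) (P : Finset G.V) :
    (Fintype.card (G.cut P).V : ℤ) - Fintype.card (G.cut P).E
      = (Fintype.card G.V : ℤ) - Fintype.card G.E + 2 * P.card := by
  rw [G.euler_cut P, Finset.sum_congr rfl fun p _ => by rw [hG p], Finset.sum_const, nsmul_eq_mul]
  ring

end OMGraph

open OMGraph in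
/-- Lemma 5.7 of the paper: if `C` is a finite trivalent graph with Euler characteristic
`V − E = −2` (genus `3` when connected) and `P` is a set of `4` (trivalent) gluing
points, then for `C̄′ = cut C P`, the number `s` of connected components and the first
Betti number `t = E′ − V′ + s` of `C̄′` satisfy `s − t = 6`; in particular, since
`0 ≤ t ≤ 3`, the pair `(s, t)` is one of `(6,0), (7,1), (8,2), (9,3)`. -/
theorem components_betti_of_cut (C : OMGraph) (htri : C.Trivalent)
    (heuler : (Fintype.card C.V : ℤ) - (Fintype.card C.E : ℤ) = -2)
    (P : Finset C.V) (hP : P.card = 4)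
    (s t : ℤ)
    (hs : s = (ncomp (cut C P) : ℤ))
    (ht : t = (Fintype.card (cut C P).E : ℤ) - (Fintype.card (cut C P).V : ℤ)
        + (ncomp (cut C P) : ℤ)) :
    s - t = 6 ∧
    (0 ≤ t → t ≤ 3 →
      (s = 6 ∧ t = 0) ∨ (s = 7 ∧ t = 1) ∨ (s = 8 ∧ t = 2) ∨ (s = 9 ∧ t = 3)) := by
  have hcut := htri.euler_cut P
  rw [hP] at hcut
  have hst : s - t = 6 := by
    rw [hs, ht]
    push_cast at hcut
    linarith
  exact ⟨hst, fun h0 h3 => by omega⟩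
end

section
/- In the dilated simplex Δ₄ = Conv{(0,0), (4,0), (0,4)}, consider the interior lattice point p = (1,1) and the lattice segment condition: any unimodular triangle (area 1/2) having p as a vertex and containing the point (1, 1+ε) in its interior for small ε > 0, and not containing (2,1) or (1,2), must have its edge opposite to p equal to one of the three segments (0,1)–(2,2), (0,2)–(3,0), or (0,3)–(2,0). -/
theorem my_aux (B C : ℤ × ℤ)
    (hB1 : 0 ≤ B.1) (hB2 : 0 ≤ B.2) (hBs : B.1 + B.2 ≤ 4)
    (hC1 : 0 ≤ C.1) (hC2 : 0 ≤ C.2) (hCs : C.1 + C.2 ≤ 4)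
    (hD : (B.1 - 1) * (C.2 - 1) - (C.1 - 1) * (B.2 - 1) = 1)
    (hb : 2 ≤ B.1) (hc : C.1 ≤ 0) (hB21 : B ≠ (2, 1)) :
    ({B, C} : Finset (ℤ × ℤ)) = {(0, 1), (2, 2)} ∨
    ({B, C} : Finset (ℤ × ℤ)) = {(0, 2), (3, 0)} ∨
    ({B, C} : Finset (ℤ × ℤ)) = {(0, 3), (2, 0)} := by
  obtain ⟨b1, b2⟩ := B
  obtain ⟨c1, c2⟩ := C
  simp only [Prod.mk.injEq, ne_eq, not_and] at *
  have hc1 : c1 = 0 := le_antisymm hc hC1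
  subst hc1
  have hb2 : b2 ≤ 2 := by omega
  have hb1 : b1 ≤ 4 := by omega
  have hc2b : c2 ≤ 4 := by omega
  interval_cases b1 <;> interval_cases b2 <;> interval_cases c2 <;>
    first
      | omega
      | (left; decide)
      | (right; left; decide)
      | (right; right; decide)


set_option maxHeartbeats 2000000

/-- Lattice classification inside the proof of Lemma 5.13: a unimodular triangle in
`Δ₄ = Conv{(0,0),(4,0),(0,4)}` with vertex `p = (1,1)`, containing `(1, 1+ε)` in its
interior for all small `ε > 0`, and not containing `(2,1)` or `(1,2)`, must have its
edge opposite `p` equal to one of `(0,1)–(2,2)`, `(0,2)–(3,0)` or `(0,3)–(2,0)`. -/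
theorem opposite_edge_classification (B C : ℤ × ℤ)
    (hsub : convexHull ℝ ({(((1 : ℝ), (1 : ℝ)) : ℝ × ℝ), ((B.1 : ℝ), (B.2 : ℝ)),
        ((C.1 : ℝ), (C.2 : ℝ))} : Set (ℝ × ℝ)) ⊆
      {x : ℝ × ℝ | 0 ≤ x.1 ∧ 0 ≤ x.2 ∧ x.1 + x.2 ≤ 4})
    (hdet : |(B.1 - 1) * (C.2 - 1) - (C.1 - 1) * (B.2 - 1)| = 1)
    (hint : ∃ ε₀ : ℝ, 0 < ε₀ ∧ ∀ ε : ℝ, 0 < ε → ε < ε₀ →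
      (((1 : ℝ), 1 + ε) : ℝ × ℝ) ∈ interior (convexHull ℝ
        ({(((1 : ℝ), (1 : ℝ)) : ℝ × ℝ), ((B.1 : ℝ), (B.2 : ℝ)),
          ((C.1 : ℝ), (C.2 : ℝ))} : Set (ℝ × ℝ))))
    (h21 : (((2 : ℝ), (1 : ℝ)) : ℝ × ℝ) ∉ convexHull ℝ
      ({(((1 : ℝ), (1 : ℝ)) : ℝ × ℝ), ((B.1 : ℝ), (B.2 : ℝ)),
        ((C.1 : ℝ), (C.2 : ℝ))} : Set (ℝ × ℝ)))
    (h12 : (((1 : ℝ), (2 : ℝ)) : ℝ × ℝ) ∉ convexHull ℝ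
      ({(((1 : ℝ), (1 : ℝ)) : ℝ × ℝ), ((B.1 : ℝ), (B.2 : ℝ)),
        ((C.1 : ℝ), (C.2 : ℝ))} : Set (ℝ × ℝ))) :
    ({B, C} : Finset (ℤ × ℤ)) = {(0, 1), (2, 2)} ∨
    ({B, C} : Finset (ℤ × ℤ)) = {(0, 2), (3, 0)} ∨
    ({B, C} : Finset (ℤ × ℤ)) = {(0, 3), (2, 0)} := by
  set V : Set (ℝ × ℝ) := ({(((1 : ℝ), (1 : ℝ)) : ℝ × ℝ), ((B.1 : ℝ), (B.2 : ℝ)),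
      ((C.1 : ℝ), (C.2 : ℝ))} : Set (ℝ × ℝ)) with hV
  have hBmem : ((B.1 : ℝ), (B.2 : ℝ)) ∈ convexHull ℝ V :=
    subset_convexHull ℝ V (by simp [hV])
  have hCmem : ((C.1 : ℝ), (C.2 : ℝ)) ∈ convexHull ℝ V :=
    subset_convexHull ℝ V (by simp [hV])
  obtain ⟨hB1', hB2', hBs'⟩ := hsub hBmem
  obtain ⟨hC1', hC2', hCs'⟩ := hsub hCmem
  have hB1 : (0 : ℤ) ≤ B.1 := by
    exact_mod_cast show (0 : ℝ) ≤ (B.1 : ℝ) from hB1'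
  have hB2 : (0 : ℤ) ≤ B.2 := by
    exact_mod_cast show (0 : ℝ) ≤ (B.2 : ℝ) from hB2'
  have hBs : B.1 + B.2 ≤ 4 := by
    exact_mod_cast show (B.1 : ℝ) + (B.2 : ℝ) ≤ 4 from hBs'
  have hC1 : (0 : ℤ) ≤ C.1 := by
    exact_mod_cast show (0 : ℝ) ≤ (C.1 : ℝ) from hC1'
  have hC2 : (0 : ℤ) ≤ C.2 := by
    exact_mod_cast show (0 : ℝ) ≤ (C.2 : ℝ) from hC2'
  have hCs : C.1 + C.2 ≤ 4 := by
    exact_mod_cast show (C.1 : ℝ) + (C.2 : ℝ) ≤ 4 from hCs'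
  set dR : ℝ := ((B.1 : ℝ) - 1) * ((C.2 : ℝ) - 1) - ((C.1 : ℝ) - 1) * ((B.2 : ℝ) - 1)
    with hdRdef
  -- the two halfplanes through the edges from (1,1)
  have hSf : convexHull ℝ V ⊆
      {q : ℝ × ℝ | 0 ≤ ((q.1 - 1) * ((C.2 : ℝ) - 1) - ((C.1 : ℝ) - 1) * (q.2 - 1)) * dR} := by
    apply convexHull_min
    · rintro x hx
      simp only [hV, Set.mem_insert_iff, Set.mem_singleton_iff] at hx
      rcases hx with rfl | rfl | rfl <;> simp only [Set.mem_setOf_eq]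
      · norm_num
      · have h : (((((B.1 : ℝ), (B.2 : ℝ)) : ℝ × ℝ).1 - 1) * ((C.2 : ℝ) - 1)
            - ((C.1 : ℝ) - 1) * ((((B.1 : ℝ), (B.2 : ℝ)) : ℝ × ℝ).2 - 1)) * dR = dR * dR := by
          rw [hdRdef]
        rw [h]; exact mul_self_nonneg dR
      · have h : (((((C.1 : ℝ), (C.2 : ℝ)) : ℝ × ℝ).1 - 1) * ((C.2 : ℝ) - 1)
            - ((C.1 : ℝ) - 1) * ((((C.1 : ℝ), (C.2 : ℝ)) : ℝ × ℝ).2 - 1)) * dR = 0 := by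
          ring
        rw [h]
    · intro x hx y hy a b ha hb hab
      simp only [Set.mem_setOf_eq] at hx hy ⊢
      have h1 : (a • x + b • y).1 = a * x.1 + b * y.1 := rfl
      have h2 : (a • x + b • y).2 = a * x.2 + b * y.2 := rfl
      rw [h1, h2]
      have key : ((a * x.1 + b * y.1 - 1) * ((C.2 : ℝ) - 1)
            - ((C.1 : ℝ) - 1) * (a * x.2 + b * y.2 - 1)) * dR
          = a * (((x.1 - 1) * ((C.2 : ℝ) - 1) - ((C.1 : ℝ) - 1) * (x.2 - 1)) * dR)
            + b * (((y.1 - 1) * ((C.2 : ℝ) - 1) - ((C.1 : ℝ) - 1) * (y.2 - 1)) * dR) := by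
        linear_combination ((((C.2 : ℝ) - 1) - ((C.1 : ℝ) - 1)) * dR) * hab
      rw [key]
      exact add_nonneg (mul_nonneg ha hx) (mul_nonneg hb hy)
  have hSg : convexHull ℝ V ⊆
      {q : ℝ × ℝ | 0 ≤ (((B.1 : ℝ) - 1) * (q.2 - 1) - (q.1 - 1) * ((B.2 : ℝ) - 1)) * dR} := by
    apply convexHull_min
    · rintro x hx
      simp only [hV, Set.mem_insert_iff, Set.mem_singleton_iff] at hx
      rcases hx with rfl | rfl | rfl <;> simp only [Set.mem_setOf_eq]
      · norm_num
      · have h : (((B.1 : ℝ) - 1) * ((((B.1 : ℝ), (B.2 : ℝ)) : ℝ × ℝ).2 - 1)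
            - ((((B.1 : ℝ), (B.2 : ℝ)) : ℝ × ℝ).1 - 1) * ((B.2 : ℝ) - 1)) * dR = 0 := by
          ring
        rw [h]
      · have h : (((B.1 : ℝ) - 1) * ((((C.1 : ℝ), (C.2 : ℝ)) : ℝ × ℝ).2 - 1)
            - ((((C.1 : ℝ), (C.2 : ℝ)) : ℝ × ℝ).1 - 1) * ((B.2 : ℝ) - 1)) * dR = dR * dR := by
          rw [hdRdef]
        rw [h]; exact mul_self_nonneg dR
    · intro x hx y hy a b ha hb hab
      simp only [Set.mem_setOf_eq] at hx hy ⊢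
      have h1 : (a • x + b • y).1 = a * x.1 + b * y.1 := rfl
      have h2 : (a • x + b • y).2 = a * x.2 + b * y.2 := rfl
      rw [h1, h2]
      have key : (((B.1 : ℝ) - 1) * (a * x.2 + b * y.2 - 1)
            - (a * x.1 + b * y.1 - 1) * ((B.2 : ℝ) - 1)) * dR
          = a * ((((B.1 : ℝ) - 1) * (x.2 - 1) - (x.1 - 1) * ((B.2 : ℝ) - 1)) * dR)
            + b * ((((B.1 : ℝ) - 1) * (y.2 - 1) - (y.1 - 1) * ((B.2 : ℝ) - 1)) * dR) := by
        linear_combination ((((B.1 : ℝ) - 1) - ((B.2 : ℝ) - 1)) * dR) * hab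
      rw [key]
      exact add_nonneg (mul_nonneg ha hx) (mul_nonneg hb hy)
  -- extract interior points
  obtain ⟨ε₀, hε₀, hε⟩ := hint
  have hεpos : 0 < ε₀ / 2 := by linarith
  have hq : (((1 : ℝ), 1 + ε₀ / 2) : ℝ × ℝ) ∈ interior (convexHull ℝ V) :=
    hε (ε₀ / 2) hεpos (by linarith)
  set ε : ℝ := ε₀ / 2 with hεdef
  rw [mem_interior_iff_mem_nhds, Metric.mem_nhds_iff] at hq
  obtain ⟨r, hr, hball⟩ := hq
  set δ : ℝ := r / 2 with hδdef
  have hδ : 0 < δ := by positivity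
  have hT0 : (((1 : ℝ), 1 + ε) : ℝ × ℝ) ∈ convexHull ℝ V :=
    hball (by simp [Metric.mem_ball, hr])
  have hdist : ∀ s : ℝ, |s| = δ →
      (((1 + s : ℝ), 1 + ε) : ℝ × ℝ) ∈ convexHull ℝ V := by
    intro s hs
    apply hball
    rw [Metric.mem_ball, Prod.dist_eq]
    simp only [Real.dist_eq]
    have h1 : |1 + s - 1| = δ := by rw [show (1 + s - 1 : ℝ) = s by ring, hs]
    have h2 : |1 + ε - (1 + ε)| = 0 := by simp
    rw [h1, h2]
    have : max δ 0 = δ := max_eq_left hδ.le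
    rw [this, hδdef]; linarith
  have hTp : (((1 + δ : ℝ), 1 + ε) : ℝ × ℝ) ∈ convexHull ℝ V :=
    hdist δ (abs_of_pos hδ)
  have hTm : (((1 + -δ : ℝ), 1 + ε) : ℝ × ℝ) ∈ convexHull ℝ V :=
    hdist (-δ) (by rw [abs_neg]; exact abs_of_pos hδ)
  -- the six inequalities
  have hf0 : 0 ≤ (((1 : ℝ) - 1) * ((C.2 : ℝ) - 1) - ((C.1 : ℝ) - 1) * ((1 + ε) - 1)) * dR :=
    hSf hT0
  have hfp : 0 ≤ (((1 + δ : ℝ) - 1) * ((C.2 : ℝ) - 1) - ((C.1 : ℝ) - 1) * ((1 + ε) - 1)) * dR :=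
    hSf hTp
  have hfm : 0 ≤ (((1 + -δ : ℝ) - 1) * ((C.2 : ℝ) - 1) - ((C.1 : ℝ) - 1) * ((1 + ε) - 1)) * dR :=
    hSf hTm
  have hg0 : 0 ≤ (((B.1 : ℝ) - 1) * ((1 + ε) - 1) - ((1 : ℝ) - 1) * ((B.2 : ℝ) - 1)) * dR :=
    hSg hT0
  have hgp : 0 ≤ (((B.1 : ℝ) - 1) * ((1 + ε) - 1) - ((1 + δ : ℝ) - 1) * ((B.2 : ℝ) - 1)) * dR :=
    hSg hTp
  have hgm : 0 ≤ (((B.1 : ℝ) - 1) * ((1 + ε) - 1) - ((1 + -δ : ℝ) - 1) * ((B.2 : ℝ) - 1)) * dR :=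
    hSg hTm
  clear hSf hSg hT0 hTp hTm hdist hball hsub hε h12

  have hDpm : (B.1 - 1) * (C.2 - 1) - (C.1 - 1) * (B.2 - 1) = 1 ∨
      (B.1 - 1) * (C.2 - 1) - (C.1 - 1) * (B.2 - 1) = -1 :=
    (abs_eq (by norm_num : (0 : ℤ) ≤ 1)).mp hdet
  have hεp : (0 : ℝ) < ε := hεpos
  rcases hDpm with hD | hD
  · -- det = 1 : B.1 ≥ 2, C.1 ≤ 0
    have hdR1 : dR = 1 := by
      rw [hdRdef]; exact_mod_cast hD
    rw [hdR1] at hf0 hfp hfm hg0 hgp hgm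
    simp only [mul_one] at hf0 hfp hfm hg0 hgp hgm
    -- C.1 ≤ 0
    have hc1le : C.1 ≤ 1 := by
      have : ((C.1 : ℝ) - 1) ≤ 0 := by nlinarith
      have : (C.1 : ℝ) ≤ 1 := by linarith
      exact_mod_cast this
    have hcle : C.1 ≤ 0 := by
      by_contra hcon
      have hc1eq : C.1 = 1 := by omega
      have hc1R : ((C.1 : ℝ) - 1) = 0 := by rw [hc1eq]; norm_num
      rw [hc1R] at hfp hfm
      have hc2le : ((C.2 : ℝ) - 1) ≤ 0 := by nlinarith
      have hc2ge : (0 : ℝ) ≤ ((C.2 : ℝ) - 1) := by nlinarith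
      have hc2eq : C.2 = 1 := by
        have : (C.2 : ℝ) = 1 := by linarith
        exact_mod_cast this
      rw [hc1eq, hc2eq] at hD
      simp at hD
    -- B.1 ≥ 2
    have hb1ge : 1 ≤ B.1 := by
      have : (0 : ℝ) ≤ ((B.1 : ℝ) - 1) := by nlinarith
      have : (1 : ℝ) ≤ (B.1 : ℝ) := by linarith
      exact_mod_cast this
    have hbge : 2 ≤ B.1 := by
      by_contra hcon
      have hb1eq : B.1 = 1 := by omega
      have hb1R : ((B.1 : ℝ) - 1) = 0 := by rw [hb1eq]; norm_num
      rw [hb1R] at hgp hgm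
      have hb2le : ((B.2 : ℝ) - 1) ≤ 0 := by nlinarith
      have hb2ge : (0 : ℝ) ≤ ((B.2 : ℝ) - 1) := by nlinarith
      have hb2eq : B.2 = 1 := by
        have : (B.2 : ℝ) = 1 := by linarith
        exact_mod_cast this
      rw [hb1eq, hb2eq] at hD
      simp at hD
    have hB21 : B ≠ (2, 1) := by
      intro h
      apply h21
      have : ((B.1 : ℝ), (B.2 : ℝ)) = (((2 : ℝ), (1 : ℝ)) : ℝ × ℝ) := by
        rw [h]; norm_num
      rw [← this]
      exact hBmem
    exact my_aux B C hB1 hB2 hBs hC1 hC2 hCs hD hbge hcle hB21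
  · -- det = -1 : C.1 ≥ 2, B.1 ≤ 0 ; apply aux with B, C swapped
    have hdR1 : dR = -1 := by
      rw [hdRdef]; exact_mod_cast hD
    rw [hdR1] at hf0 hfp hfm hg0 hgp hgm
    -- C.1 ≥ 2
    have hc1ge : 1 ≤ C.1 := by
      have : (0 : ℝ) ≤ ((C.1 : ℝ) - 1) := by nlinarith
      have : (1 : ℝ) ≤ (C.1 : ℝ) := by linarith
      exact_mod_cast this
    have hcge : 2 ≤ C.1 := by
      by_contra hcon
      have hc1eq : C.1 = 1 := by omega
      have hc1R : ((C.1 : ℝ) - 1) = 0 := by rw [hc1eq]; norm_num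
      rw [hc1R] at hfp hfm
      have hc2le : ((C.2 : ℝ) - 1) ≤ 0 := by nlinarith
      have hc2ge : (0 : ℝ) ≤ ((C.2 : ℝ) - 1) := by nlinarith
      have hc2eq : C.2 = 1 := by
        have : (C.2 : ℝ) = 1 := by linarith
        exact_mod_cast this
      rw [hc1eq, hc2eq] at hD
      simp at hD
    -- B.1 ≤ 0
    have hb1le : B.1 ≤ 1 := by
      have : ((B.1 : ℝ) - 1) ≤ 0 := by nlinarith
      have : (B.1 : ℝ) ≤ 1 := by linarith
      exact_mod_cast this
    have hble : B.1 ≤ 0 := by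
      by_contra hcon
      have hb1eq : B.1 = 1 := by omega
      have hb1R : ((B.1 : ℝ) - 1) = 0 := by rw [hb1eq]; norm_num
      rw [hb1R] at hgp hgm
      have hb2le : ((B.2 : ℝ) - 1) ≤ 0 := by nlinarith
      have hb2ge : (0 : ℝ) ≤ ((B.2 : ℝ) - 1) := by nlinarith
      have hb2eq : B.2 = 1 := by
        have : (B.2 : ℝ) = 1 := by linarith
        exact_mod_cast this
      rw [hb1eq, hb2eq] at hD
      simp at hD
    have hC21 : C ≠ (2, 1) := by
      intro h
      apply h21
      have : ((C.1 : ℝ), (C.2 : ℝ)) = (((2 : ℝ), (1 : ℝ)) : ℝ × ℝ) := by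
        rw [h]; norm_num
      rw [← this]
      exact hCmem
    have hD' : (C.1 - 1) * (B.2 - 1) - (B.1 - 1) * (C.2 - 1) = 1 := by linarith
    have := my_aux C B hC1 hC2 hCs hB1 hB2 hBs hD' hcge hble hC21
    rw [Finset.pair_comm B C]
    exact this
end

section
/- Let K be a polyhedral subcomplex of a lattice triangulation of a polygon, with 0-simplices K₀, such that the 2-cells of K correspond bijectively to vertices of a graph Γ, the 1-cells of K correspond bijectively to edges of Γ, and a vertex v of Γ is an endpoint of edge E of Γ if and only if the 2-cell dual to v contains the 1-cell dual to E as a face. Then the connected components of |K| ∖ |K₀| are in bijection with the connected components of Γ. -/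
/-!
The closed triangles of `K`, with the points of `K₀` removed, cover `|K| ∖ |K₀|` by finitely
many relatively closed pieces; every point of an edge lies in the triangle dual to an endpoint of
the dual edge. Each piece is connected: two points of a planar convex set with nonempty interior
can be joined through an interior point lying on none of the countably many lines through them
and the removed points. Two pieces meet exactly when the triangles are equal or share an edge,
since distinct triangles meet in the hull of their common vertices and these vertices are
removed; so pieces meet iff the dual vertices of `Γ` are equal or adjacent. For a finite closed
cover by connected sets, connected components correspond to the classes of the equivalence
relation generated by "the pieces meet", because the union of the pieces of one class is clopen.
-/

open Set Module

namespace ConnectedComponents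

variable {X ι : Type*} [TopologicalSpace X] {A : ι → Set X} {r : ι → ι → Prop}

theorem isClopen_biUnion_quot_eq [Finite ι] (hclosed : ∀ i, IsClosed (A i))
    (hcover : ∀ x, ∃ i, x ∈ A i)
    (hmeet : ∀ i j, (A i ∩ A j).Nonempty → Quot.mk r i = Quot.mk r j) (q : Quot r) :
    IsClopen (⋃ i ∈ {i | Quot.mk r i = q}, A i) := by
  have hclosed' (p : Quot r → Prop) : IsClosed (⋃ i ∈ {i | p (Quot.mk r i)}, A i) :=
    (toFinite _).isClosed_biUnion fun i _ => hclosed i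
  refine ⟨hclosed' (· = q), ?_⟩
  convert (hclosed' (· ≠ q)).isOpen_compl using 1
  ext x
  obtain ⟨i, hi⟩ := hcover x
  simp only [mem_iUnion, mem_ofPred_eq, mem_compl_iff, not_exists, not_and, exists_prop]
  exact ⟨fun ⟨j, hj, hxj⟩ k hk hxk => hk (hmeet k j ⟨x, hxk, hxj⟩ ▸ hj),
    fun h => ⟨i, not_not.mp fun hiq => h i hiq hi, hi⟩⟩

theorem nonempty_equiv_quot_of_finite_closed_cover [Finite ι] (hclosed : ∀ i, IsClosed (A i))
    (hconn : ∀ i, IsConnected (A i)) (hcover : ∀ x, ∃ i, x ∈ A i)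
    (hr : ∀ i j, r i j → (A i ∩ A j).Nonempty)
    (hmeet : ∀ i j, (A i ∩ A j).Nonempty → Quot.mk r i = Quot.mk r j) :
    Nonempty (ConnectedComponents X ≃ Quot r) := by
  choose p hp using fun i => (hconn i).nonempty
  have mk_eq {i : ι} {x y : X} (hx : x ∈ A i) (hy : y ∈ A i) : mk x = mk y :=
    coe_eq_coe'.mpr ((hconn i).isPreconnected.subset_connectedComponent hy hx)
  let g : Quot r → ConnectedComponents X := Quot.lift (fun i => mk (p i)) fun i j hij => by
    obtain ⟨x, hxi, hxj⟩ := hr i j hij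
    exact (mk_eq (hp i) hxi).trans (mk_eq hxj (hp j))
  refine ⟨(Equiv.ofBijective g ⟨?_, ?_⟩).symm⟩
  · rintro ⟨i⟩ ⟨j⟩ hij
    have hU := isClopen_biUnion_quot_eq hclosed hcover hmeet (Quot.mk r i)
    have hpj : p j ∈ connectedComponent (p i) := coe_eq_coe'.mp hij.symm
    obtain ⟨k, hk, hpk⟩ := mem_iUnion₂.mp (hU.connectedComponent_subset
      (mem_biUnion (show Quot.mk r i = _ from rfl) (hp i)) hpj)
    exact hk.symm.trans (hmeet k j ⟨p j, hpk, hp j⟩)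
  · intro c
    obtain ⟨x, rfl⟩ := surjective_coe c
    obtain ⟨i, hi⟩ := hcover x
    exact ⟨Quot.mk r i, mk_eq (hp i) hi⟩

theorem nonempty_equiv_quot_of_finite_closed_cover_of_subset {Y : Type*} [TopologicalSpace Y]
    [Finite ι] {X : Set Y} {T : ι → Set Y} (hclosed : ∀ i, IsClosed (T i))
    (hconn : ∀ i, IsConnected (X ∩ T i)) (hcover : X ⊆ ⋃ i, T i)
    (hr : ∀ i j, r i j → (X ∩ T i ∩ T j).Nonempty)
    (hmeet : ∀ i j, (X ∩ T i ∩ T j).Nonempty → Quot.mk r i = Quot.mk r j) :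
    Nonempty (ConnectedComponents X ≃ Quot r) := by
  have nonempty_iff (S : Set Y) : (Subtype.val ⁻¹' S : Set X).Nonempty ↔ (X ∩ S).Nonempty := by
    rw [← image_nonempty, Subtype.image_preimage_coe]
  refine nonempty_equiv_quot_of_finite_closed_cover (A := fun i => Subtype.val ⁻¹' T i)
    (fun i => (hclosed i).preimage continuous_subtype_val) (fun i => ⟨?_, ?_⟩)
    (fun x => by simpa using hcover x.2) (fun i j hij => ?_) (fun i j hij => hmeet i j ?_)
  · exact (nonempty_iff _).mpr (hconn i).nonempty
  · rw [← Topology.IsInducing.subtypeVal.isPreconnected_image, Subtype.image_preimage_coe]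
    exact (hconn i).isPreconnected
  · rw [← preimage_inter, nonempty_iff, ← inter_assoc]
    exact hr i j hij
  · rwa [← preimage_inter, nonempty_iff, ← inter_assoc] at hij

end ConnectedComponents

section Convex

variable {E : Type*} [AddCommGroup E] [Module ℝ E]

theorem Convex.segment_subset_diff {s F : Set E} (hs : Convex ℝ s) {a z : E} (ha : a ∈ s \ F)
    (hz : z ∈ s) (hlines : ∀ p ∈ F, z ∉ line[ℝ, a, p]) : segment ℝ a z ⊆ s \ F := by
  intro q hq
  refine ⟨hs.segment_subset ha.1 hz hq, fun hqF => hlines q hqF ?_⟩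
  have haq : a ≠ q := fun h => ha.2 (h ▸ hqF)
  exact (mem_segment_iff_wbtw.mp hq).collinear.mem_affineSpan_of_mem_of_ne
    (by simp) (by simp) (by simp) haq

theorem segment_infinite {a b : E} (h : a ≠ b) : (segment ℝ a b).Infinite := by
  rw [segment_eq_image_lineMap]
  exact (Icc_infinite zero_lt_one).image (AffineMap.lineMap_injective ℝ h).injOn

theorem two_le_card_of_mem_convexHull_of_notMem [DecidableEq E] {t : Finset E} {x : E}
    (hx : x ∈ convexHull ℝ (t : Set E)) (hxt : x ∉ t) : 2 ≤ t.card := by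
  by_contra! h
  have hsub : (t : Set E).Subsingleton := fun a ha b hb =>
    Finset.card_le_one.mp (Nat.le_of_lt_succ h) a ha b hb
  rw [(hsub.convex (𝕜 := ℝ)).convexHull_eq] at hx
  exact hxt hx

end Convex

section FiniteDimensional

variable {E : Type*} [NormedAddCommGroup E] [NormedSpace ℝ E] [FiniteDimensional ℝ E]

theorem dense_compl_line (hE : 1 < finrank ℝ E) (x p : E) : Dense (line[ℝ, x, p] : Set E)ᶜ := by
  refine interior_eq_empty_iff_dense_compl.mp (not_nonempty_iff_eq_empty.mp fun hint => ?_)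
  have htop : line[ℝ, x, p] = ⊤ := by
    simpa using ((line[ℝ, x, p]).convex.interior_nonempty_iff_affineSpan_eq_top).mp hint
  have hle := collinear_iff_finrank_le_one.mp (collinear_pair ℝ x p)
  rw [← direction_affineSpan, htop, AffineSubspace.direction_top, finrank_top] at hle
  omega

theorem exists_mem_notMem_lines (hE : 1 < finrank ℝ E) {U A F : Set E} (hU : IsOpen U)
    (hne : U.Nonempty) (hA : A.Countable) (hF : F.Countable) :
    ∃ z ∈ U, ∀ a ∈ A, ∀ p ∈ F, z ∉ line[ℝ, a, p] := by
  have hdense : Dense (⋂ ap ∈ A ×ˢ F, (line[ℝ, ap.1, ap.2] : Set E)ᶜ) :=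
    dense_biInter_of_isOpen (fun _ _ => (AffineSubspace.closed_of_finiteDimensional _).isOpen_compl)
      (hA.prod hF) fun ap _ => dense_compl_line hE ap.1 ap.2
  obtain ⟨z, hzU, hz⟩ := hdense.inter_open_nonempty U hU hne
  exact ⟨z, hzU, fun a ha p hp => mem_iInter₂.mp hz (a, p) ⟨ha, hp⟩⟩

theorem Convex.isPathConnected_diff_countable (hE : 1 < finrank ℝ E) {s F : Set E}
    (hs : Convex ℝ s) (hint : (interior s).Nonempty) (hF : F.Countable) :
    IsPathConnected (s \ F) := by
  have : Nontrivial E := finrank_pos_iff.mp (zero_lt_one.trans hE)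
  refine isPathConnected_iff.mpr ⟨?_, fun x hx y hy => ?_⟩
  · obtain ⟨z, hzs, hzF⟩ := (hF.dense_compl ℝ).inter_open_nonempty _ isOpen_interior hint
    exact ⟨z, interior_subset hzs, hzF⟩
  obtain ⟨z, hz, hlines⟩ :=
    exists_mem_notMem_lines hE isOpen_interior hint (toFinite {x, y}).countable hF
  have hzs := interior_subset hz
  exact (JoinedIn.of_segment_subset (hs.segment_subset_diff hx hzs (hlines x (by simp)))).trans
    (JoinedIn.of_segment_subset (hs.segment_subset_diff hy hzs (hlines y (by simp)))).symm

theorem interior_convexHull_nonempty_of_not_collinear (hE : finrank ℝ E = 2) {s : Set E}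
    (hs : ¬ Collinear ℝ s) : (interior (convexHull ℝ s)).Nonempty := by
  rw [(convex_convexHull ℝ s).interior_nonempty_iff_affineSpan_eq_top, affineSpan_convexHull]
  have hne : s.Nonempty := nonempty_iff_ne_empty.mpr fun h => hs (h ▸ collinear_empty ℝ E)
  refine (AffineSubspace.affineSpan_eq_top_iff_vectorSpan_eq_top_of_nonempty ℝ E E hne).mpr
    (Submodule.eq_top_of_finrank_eq ?_)
  have := Submodule.finrank_le (vectorSpan ℝ s)
  rw [collinear_iff_finrank_le_one] at hs
  omega

end FiniteDimensional

section DualComplex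

variable {P : Type*} [AddCommGroup P] [Module ℝ P] {K₂ K₁ : Finset (Finset P)} {K₀ : Finset P}

theorem inter_mem_of_mem_convexHull_inter_of_notMem [DecidableEq P] (h2card : ∀ Δ ∈ K₂, Δ.card = 3)
    (hface21 : ∀ Δ ∈ K₂, ∀ e ⊆ Δ, e.card = 2 → e ∈ K₁) (hface10 : ∀ e ∈ K₁, ∀ v ∈ e, v ∈ K₀)
    {Δ Δ' : Finset P} (hΔ : Δ ∈ K₂) (hΔ' : Δ' ∈ K₂) (hne : Δ ≠ Δ')
    (htriang : convexHull ℝ (Δ : Set P) ∩ convexHull ℝ (Δ' : Set P) =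
      convexHull ℝ ((Δ ∩ Δ' : Finset P) : Set P))
    {x : P} (hx : x ∈ convexHull ℝ (Δ : Set P) ∩ convexHull ℝ (Δ' : Set P)) (hxK : x ∉ K₀) :
    Δ ∩ Δ' ∈ K₁ := by
  have hvert : x ∉ Δ ∩ Δ' := fun hxΔ => by
    obtain ⟨e, hxe, heΔ, he⟩ := Finset.exists_subsuperset_card_eq (n := 2)
      (Finset.singleton_subset_iff.mpr (Finset.mem_of_mem_inter_left hxΔ)) (by simp)
      (by rw [h2card Δ hΔ]; omega)
    exact hxK (hface10 e (hface21 Δ hΔ e heΔ he) x (hxe (Finset.mem_singleton_self x)))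
  have hlow := two_le_card_of_mem_convexHull_of_notMem (htriang ▸ hx) hvert
  have hsub : Δ ∩ Δ' ⊆ Δ := Finset.inter_subset_left
  have hhigh : (Δ ∩ Δ').card ≠ 3 := fun h3 => by
    have hΔΔ' := Finset.eq_of_subset_of_card_le hsub (by rw [h2card Δ hΔ, h3])
    exact hne (Finset.eq_of_subset_of_card_le (Finset.inter_eq_left.mp hΔΔ')
      (by rw [h2card Δ hΔ, h2card Δ' hΔ']))
  have := Finset.card_le_card hsub
  exact hface21 Δ hΔ _ hsub (by rw [h2card Δ hΔ] at this; omega)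

theorem diff_subset_iUnion_convexHull {V : Type*} (fV : V ≃ {Δ // Δ ∈ K₂})
    (hedge : ∀ e ∈ K₁, ∃ Δ ∈ K₂, e ⊆ Δ) :
    ((⋃ Δ ∈ K₂, convexHull ℝ (Δ : Set P)) ∪ (⋃ e ∈ K₁, convexHull ℝ (e : Set P)) ∪ K₀) \ K₀ ⊆
      ⋃ w, convexHull ℝ ((fV w : Finset P) : Set P) := by
  have hcell {Δ : Finset P} (hΔ : Δ ∈ K₂) {x : P} (hx : x ∈ convexHull ℝ (Δ : Set P)) :
      x ∈ ⋃ w, convexHull ℝ ((fV w : Finset P) : Set P) :=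
    mem_iUnion.mpr ⟨fV.symm ⟨Δ, hΔ⟩, by simpa using hx⟩
  rintro x ⟨(h2 | h1) | h0, hxK⟩
  · obtain ⟨Δ, hΔ, hx⟩ := mem_iUnion₂.mp h2
    exact hcell hΔ hx
  · obtain ⟨e, he, hx⟩ := mem_iUnion₂.mp h1
    obtain ⟨Δ, hΔ, heΔ⟩ := hedge e he
    exact hcell hΔ (convexHull_mono (Finset.coe_subset.mpr heΔ) hx)
  · exact absurd h0 hxK

end DualComplex

theorem OMGraph.mk_eq_mk_of_incident {G : OMGraph} {E : G.E} {v w : G.V}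
    (hv : (G.ends E).1 = v ∨ (G.ends E).2 = v) (hw : (G.ends E).1 = w ∨ (G.ends E).2 = w) :
    Quot.mk G.Adj v = Quot.mk G.Adj w := by
  rcases hv with rfl | rfl <;> rcases hw with rfl | rfl
  · rfl
  · exact Quot.sound ⟨E, Or.inl rfl⟩
  · exact Quot.sound ⟨E, Or.inr rfl⟩
  · rfl

section DualGraph

variable {P : Type*} [AddCommGroup P] [Module ℝ P] [DecidableEq P]
  {K₂ K₁ : Finset (Finset P)} {K₀ : Finset P} {Γ : OMGraph}
  {fV : Γ.V ≃ {Δ // Δ ∈ K₂}} {fE : Γ.E ≃ {e // e ∈ K₁}}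

theorem exists_notMem_mem_convexHull_inter_of_adj (h1card : ∀ e ∈ K₁, e.card = 2)
    (hsub : ∀ w E, ((Γ.ends E).1 = w ∨ (Γ.ends E).2 = w) →
      ((fE E : Finset P) : Set P) ⊆ ((fV w : Finset P) : Set P))
    {w w' : Γ.V} (hadj : Γ.Adj w w') :
    ∃ x ∉ (K₀ : Set P), x ∈ convexHull ℝ ((fV w : Finset P) : Set P) ∩
      convexHull ℝ ((fV w' : Finset P) : Set P) := by
  obtain ⟨E, hE⟩ := hadj
  obtain ⟨a, b, hab, habe⟩ := Finset.card_eq_two.mp (h1card _ (fE E).2)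
  have hseg : segment ℝ a b = convexHull ℝ ((fE E : Finset P) : Set P) := by
    rw [habe, Finset.coe_pair, convexHull_pair]
  obtain ⟨x, hx, hxK⟩ := ((segment_infinite hab).sdiff K₀.finite_toSet).nonempty
  have hmem (v : Γ.V) (hv : (Γ.ends E).1 = v ∨ (Γ.ends E).2 = v) :
      x ∈ convexHull ℝ ((fV v : Finset P) : Set P) :=
    convexHull_mono (hsub v E hv) (hseg ▸ hx)
  refine ⟨x, hxK, hmem w ?_, hmem w' ?_⟩ <;> rcases hE with h | h <;> simp [h]

theorem mk_eq_mk_of_mem_convexHull_inter (h2card : ∀ Δ ∈ K₂, Δ.card = 3)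
    (hface21 : ∀ Δ ∈ K₂, ∀ e ⊆ Δ, e.card = 2 → e ∈ K₁) (hface10 : ∀ e ∈ K₁, ∀ v ∈ e, v ∈ K₀)
    (htriang : ∀ Δ₁ ∈ K₂, ∀ Δ₂ ∈ K₂, Δ₁ ≠ Δ₂ →
      convexHull ℝ (Δ₁ : Set P) ∩ convexHull ℝ (Δ₂ : Set P) =
        convexHull ℝ ((Δ₁ ∩ Δ₂ : Finset P) : Set P))
    (hinc : ∀ w E, ((fE E : Finset P) : Set P) ⊆ ((fV w : Finset P) : Set P) →
      ((Γ.ends E).1 = w ∨ (Γ.ends E).2 = w))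
    {w w' : Γ.V} {x : P} (hx : x ∈ convexHull ℝ ((fV w : Finset P) : Set P) ∩
      convexHull ℝ ((fV w' : Finset P) : Set P)) (hxK : x ∉ K₀) :
    Quot.mk Γ.Adj w = Quot.mk Γ.Adj w' := by
  by_cases hww : w = w'
  · rw [hww]
  have hne : (fV w : Finset P) ≠ fV w' := fun h => hww (fV.injective (Subtype.ext h))
  have he := inter_mem_of_mem_convexHull_inter_of_notMem h2card hface21 hface10 (fV w).2
    (fV w').2 hne (htriang _ (fV w).2 _ (fV w').2 hne) hx hxK
  have hfE : (fE (fE.symm ⟨_, he⟩) : Finset P) = (fV w : Finset P) ∩ fV w' := by simp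
  exact OMGraph.mk_eq_mk_of_incident
    (hinc w _ (by rw [hfE]; exact Finset.coe_subset.mpr Finset.inter_subset_left))
    (hinc w' _ (by rw [hfE]; exact Finset.coe_subset.mpr Finset.inter_subset_right))

end DualGraph

open OMGraph in
theorem components_of_complement_biject_graph_components_general
    (K₂ K₁ : Finset (Finset (ℝ × ℝ))) (K₀ : Finset (ℝ × ℝ))
    (h2card : ∀ Δ ∈ K₂, Δ.card = 3) (h1card : ∀ e ∈ K₁, e.card = 2)
    (h2indep : ∀ Δ ∈ K₂, ¬ Collinear ℝ (Δ : Set (ℝ × ℝ)))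
    -- subcomplex: faces of cells belong to the complex
    (hface21 : ∀ Δ ∈ K₂, ∀ e ⊆ Δ, e.card = 2 → e ∈ K₁)
    (hface10 : ∀ e ∈ K₁, ∀ v ∈ e, v ∈ K₀)
    -- part of a triangulation: cells meet along common faces
    (htriang : ∀ Δ₁ ∈ K₂, ∀ Δ₂ ∈ K₂, Δ₁ ≠ Δ₂ →
      convexHull ℝ (Δ₁ : Set (ℝ × ℝ)) ∩ convexHull ℝ (Δ₂ : Set (ℝ × ℝ)) =
        convexHull ℝ ((Δ₁ ∩ Δ₂ : Finset (ℝ × ℝ)) : Set (ℝ × ℝ)))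
    (Γ : OMGraph)
    (fV : Γ.V ≃ {Δ // Δ ∈ K₂}) (fE : Γ.E ≃ {e // e ∈ K₁})
    (hinc : ∀ (w : Γ.V) (E : Γ.E),
      ((Γ.ends E).1 = w ∨ (Γ.ends E).2 = w) ↔
        ((fE E : Finset (ℝ × ℝ)) : Set (ℝ × ℝ)) ⊆ ((fV w : Finset (ℝ × ℝ)) : Set (ℝ × ℝ))) :
    Nonempty
      (ConnectedComponents
          (↥(((⋃ Δ ∈ K₂, convexHull ℝ ((Δ : Finset (ℝ × ℝ)) : Set (ℝ × ℝ))) ∪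
              (⋃ e ∈ K₁, convexHull ℝ ((e : Finset (ℝ × ℝ)) : Set (ℝ × ℝ))) ∪
              (K₀ : Set (ℝ × ℝ))) \ (K₀ : Set (ℝ × ℝ)))) ≃
        Quot Γ.Adj) := by
  have hplane : finrank ℝ (ℝ × ℝ) = 2 := by simp
  have hcell (w : Γ.V) : convexHull ℝ ((fV w : Finset (ℝ × ℝ)) : Set (ℝ × ℝ)) ⊆
      (⋃ Δ ∈ K₂, convexHull ℝ ((Δ : Finset (ℝ × ℝ)) : Set (ℝ × ℝ))) ∪
        (⋃ e ∈ K₁, convexHull ℝ ((e : Finset (ℝ × ℝ)) : Set (ℝ × ℝ))) ∪ (K₀ : Set (ℝ × ℝ)) :=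
    fun x hx => Or.inl (Or.inl (mem_biUnion (fV w).2 hx))
  have hedge (e) (he : e ∈ K₁) : ∃ Δ ∈ K₂, e ⊆ Δ := by
    let E := fE.symm ⟨e, he⟩
    refine ⟨fV (Γ.ends E).1, (fV _).2, Finset.coe_subset.mp ?_⟩
    simpa [E] using (hinc _ E).mp (Or.inl rfl)
  refine ConnectedComponents.nonempty_equiv_quot_of_finite_closed_cover_of_subset
    (fun w => ((fV w).1.finite_toSet.isCompact_convexHull ℝ).isClosed) (fun w => ?_)
    (diff_subset_iUnion_convexHull fV hedge) (fun w w' hadj => ?_)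
    (fun w w' ⟨x, ⟨⟨_, hxK⟩, hxw⟩, hxw'⟩ => mk_eq_mk_of_mem_convexHull_inter h2card hface21
      hface10 htriang (fun w E => (hinc w E).mpr) ⟨hxw, hxw'⟩ hxK)
  · rw [inter_comm, ← inter_sdiff_assoc, inter_eq_left.mpr (hcell w)]
    refine ((convex_convexHull ℝ _).isPathConnected_diff_countable (by omega)
      ?_ K₀.countable_toSet).isConnected
    exact interior_convexHull_nonempty_of_not_collinear hplane (h2indep _ (fV w).2)
  · obtain ⟨x, hxK, hxw, hxw'⟩ :=
      exists_notMem_mem_convexHull_inter_of_adj h1card (fun w E => (hinc w E).mp) hadj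
    exact ⟨x, ⟨⟨hcell w hxw, hxK⟩, hxw⟩, hxw'⟩

open OMGraph in
/-- Lemma 4.7 of the paper: let `K = (K₂, K₁, K₀)` be a polyhedral subcomplex of a
lattice triangulation of a polygon in `ℝ²`, and let `Γ` be a graph whose vertices
correspond bijectively to the 2-cells of `K` (via `fV`), whose edges correspond
bijectively to the 1-cells of `K` (via `fE`), and such that a vertex `w` of `Γ` is an
endpoint of an edge `E` if and only if the 2-cell dual to `w` contains the 1-cell dual
to `E` as a face.  Then the connected components of `|K| ∖ |K₀|` are in bijection with
the connected components of `Γ`. -/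
theorem components_of_complement_biject_graph_components
    (K₂ K₁ : Finset (Finset (ℝ × ℝ))) (K₀ : Finset (ℝ × ℝ))
    (h2card : ∀ Δ ∈ K₂, Δ.card = 3) (h1card : ∀ e ∈ K₁, e.card = 2)
    (h2indep : ∀ Δ ∈ K₂, ¬ Collinear ℝ (Δ : Set (ℝ × ℝ)))
    (hlat : ∀ v ∈ K₀, ∃ a b : ℤ, v = (((a : ℝ), (b : ℝ)) : ℝ × ℝ))
    -- subcomplex: faces of cells belong to the complex
    (hface21 : ∀ Δ ∈ K₂, ∀ e ⊆ Δ, e.card = 2 → e ∈ K₁)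
    (hface10 : ∀ e ∈ K₁, ∀ v ∈ e, v ∈ K₀)
    -- part of a triangulation: cells meet along common faces
    (htriang : ∀ Δ₁ ∈ K₂, ∀ Δ₂ ∈ K₂, Δ₁ ≠ Δ₂ →
      convexHull ℝ (Δ₁ : Set (ℝ × ℝ)) ∩ convexHull ℝ (Δ₂ : Set (ℝ × ℝ)) =
        convexHull ℝ ((Δ₁ ∩ Δ₂ : Finset (ℝ × ℝ)) : Set (ℝ × ℝ)))
    (Γ : OMGraph)
    (fV : Γ.V ≃ {Δ // Δ ∈ K₂}) (fE : Γ.E ≃ {e // e ∈ K₁})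
    (hinc : ∀ (w : Γ.V) (E : Γ.E),
      ((Γ.ends E).1 = w ∨ (Γ.ends E).2 = w) ↔
        ((fE E : Finset (ℝ × ℝ)) : Set (ℝ × ℝ)) ⊆ ((fV w : Finset (ℝ × ℝ)) : Set (ℝ × ℝ))) :
    Nonempty
      (ConnectedComponents
          (↥(((⋃ Δ ∈ K₂, convexHull ℝ ((Δ : Finset (ℝ × ℝ)) : Set (ℝ × ℝ))) ∪
              (⋃ e ∈ K₁, convexHull ℝ ((e : Finset (ℝ × ℝ)) : Set (ℝ × ℝ))) ∪
              (K₀ : Set (ℝ × ℝ))) \ (K₀ : Set (ℝ × ℝ)))) ≃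
        Quot Γ.Adj) :=
  components_of_complement_biject_graph_components_general K₂ K₁ K₀ h2card h1card h2indep hface21
    hface10 htriang Γ fV fE hinc
end

section
/- A domain D of ℝ² ∖ V(g), where g is a tropical polynomial in two variables, is bounded (equivalently, enclosed by a cycle in V(g)) if and only if the lattice point of the dual subdivision Subdiv_g corresponding to D lies in the interior of the Newton polytope Newt(g). More generally, if K is the subcomplex of Subdiv_g dual to V(g) ∩ ℝ²≤0, then D ∈ P₂(g) is enclosed by a cycle of V(g) ∩ ℝ²≤0 if and only if the corresponding 0-simplex lies in the interior of |K|. -/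
/-- A tropical polynomial in two variables:
`g(x,y) = max over (a,b) ∈ support of (coeff (a,b) + a·x + b·y)`. -/
structure TropPoly2 where
  support : Finset (ℕ × ℕ)
  coeff : ℕ × ℕ → ℝ

namespace TropPoly2

/-- The value of the term with exponent `t` at the point `p`. -/
def val (g : TropPoly2) (t : ℕ × ℕ) (p : ℝ × ℝ) : ℝ :=
  g.coeff t + (t.1 : ℝ) * p.1 + (t.2 : ℝ) * p.2

/-- The (open) domain of `ℝ² ∖ V(g)` corresponding to the term `t`: the locus where
the term `t` strictly dominates all other terms. -/
def domain (g : TropPoly2) (t : ℕ × ℕ) : Set (ℝ × ℝ) :=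
  {p | ∀ s ∈ g.support, s ≠ t → g.val s p < g.val t p}

/-- The cell of the dual subdivision `Subdiv_g` selected by a point `p`: the convex hull
of the exponents of the terms attaining the maximum at `p`. -/
def dualCell (g : TropPoly2) (p : ℝ × ℝ) : Set (ℝ × ℝ) :=
  convexHull ℝ
    {x : ℝ × ℝ | ∃ t ∈ g.support, x = (((t.1 : ℝ), (t.2 : ℝ)) : ℝ × ℝ) ∧
      ∀ s ∈ g.support, g.val s p ≤ g.val t p}

/-- The support `|K|` of the subcomplex of `Subdiv_g` dual to `V(g) ∩ ℝ≤0²`: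
the union of the dual cells of all points of the closed third quadrant. -/
def Ksupp (g : TropPoly2) : Set (ℝ × ℝ) :=
  ⋃ p ∈ {p : ℝ × ℝ | p.1 ≤ 0 ∧ p.2 ≤ 0}, dualCell g p

end TropPoly2

/-! A point `x` lies in the dual cell at `p` iff it is a subgradient of `g` at `p`, i.e. iff `p`
minimises `g - ⟨x, ·⟩`. When `x` is interior to the Newton polygon this function is coercive, so
`x` lies in some dual cell; as there are finitely many cells, for `x` near the vertex `t` these
minimisers lie in the closure of the domain of `t`.

The domain of `t` is unbounded iff some direction `v ≠ 0` has `⟨s - t, v⟩ ≤ 0` for all exponents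
`s` (then a ray stays in the domain), which by the supporting hyperplane theorem says that `t` is
not interior to the Newton polygon. In the quadrant version, `|K|` is a neighbourhood of `t` as
soon as the closed domain of `t` lies in the quadrant; conversely, if a boundary point `p₀` has
`⟨e, p₀⟩ > 0` for a coordinate direction `e`, the subgradient inequality shows that for small
`μ > 0` the point `t + μ e` lies in no dual cell of a point of the quadrant.
-/

open Filter Topology Bornology

lemma Bornology.IsBounded.exists_add_smul_notMem {E : Type*} [NormedAddCommGroup E]
    [NormedSpace ℝ E] {D : Set E} (hD : IsBounded D) (p : E) {v : E} (hv : v ≠ 0) :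
    ∃ r : ℝ, 0 ≤ r ∧ p + r • v ∉ D := by
  obtain ⟨C, hC⟩ := isBounded_iff_forall_norm_le.mp hD
  have hv' : 0 < ‖v‖ := norm_pos_iff.mpr hv
  refine ⟨(|C| + ‖p‖ + 1) / ‖v‖, by positivity, fun hmem => ?_⟩
  have hnorm : ‖((|C| + ‖p‖ + 1) / ‖v‖) • v‖ = |C| + ‖p‖ + 1 := by
    rw [norm_smul, Real.norm_of_nonneg (by positivity), div_mul_cancel₀ _ hv'.ne']
  have := norm_sub_le (p + ((|C| + ‖p‖ + 1) / ‖v‖) • v) p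
  rw [add_sub_cancel_left, hnorm] at this
  linarith [hC _ hmem, le_abs_self C]

lemma IsOpen.exists_add_smul_mem_frontier {E : Type*} [NormedAddCommGroup E]
    [NormedSpace ℝ E] {D : Set E} (hDo : IsOpen D) (hD : IsBounded D) {p : E} (hp : p ∈ D)
    {v : E} (hv : v ≠ 0) : ∃ r : ℝ, 0 ≤ r ∧ p + r • v ∈ frontier D := by
  set ray := (fun r : ℝ => p + r • v) '' Set.Ici 0
  have hray : IsPreconnected ray :=
    isPreconnected_Ici.image _ (by fun_prop)
  have hmeet : (ray ∩ D).Nonempty := ⟨p, ⟨0, Set.self_mem_Ici, by simp⟩, hp⟩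
  obtain ⟨r, hr, hrD⟩ := hD.exists_add_smul_notMem p hv
  have hleave : ¬ ray ⊆ D := fun h => hrD (h ⟨r, hr, rfl⟩)
  obtain ⟨_, ⟨hcl, s, hs, rfl⟩, hnot⟩ :=
    Set.not_subset.mp (mt (hray.subset_of_closure_inter_subset hDo hmeet) hleave)
  exact ⟨s, hs, hcl, by rwa [hDo.interior_eq]⟩

lemma eventually_forall_mem_imp_mem {X ι : Type*} [TopologicalSpace X] (I : Finset ι)
    {C : ι → Set X} (hC : ∀ i ∈ I, IsClosed (C i)) (y : X) :
    ∀ᶠ x in 𝓝 y, ∀ i ∈ I, x ∈ C i → y ∈ C i := by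
  refine (eventually_all_finset I).mpr fun i hi => ?_
  by_cases hy : y ∈ C i
  · exact Eventually.of_forall fun _ _ => hy
  · exact Filter.mem_of_superset ((hC i hi).isOpen_compl.mem_nhds hy) fun x hx h => absurd h hx

lemma eventually_add_mul_neg {a b : ℝ} (ha : a ≤ 0) (hb : a = 0 → b < 0) :
    ∀ᶠ r in 𝓝[>] 0, a + r * b < 0 := by
  rcases ha.lt_or_eq with ha | rfl
  · have : Continuous (fun r : ℝ => a + r * b) := by fun_prop
    exact nhdsWithin_le_nhds ((this.tendsto' 0 a (by simp)).eventually (gt_mem_nhds ha))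
  · filter_upwards [self_mem_nhdsWithin] with r hr
    simpa using mul_neg_of_pos_of_neg hr (hb rfl)

lemma exists_linearMap_ne_zero_le_of_notMem_interior {E : Type*} [NormedAddCommGroup E]
    [NormedSpace ℝ E] [FiniteDimensional ℝ E] [Nontrivial E] {C : Set E} (hC : Convex ℝ C)
    {y : E} (hy : y ∉ interior C) : ∃ f : E →ₗ[ℝ] ℝ, f ≠ 0 ∧ ∀ a ∈ C, f a ≤ f y := by
  by_cases hint : (interior C).Nonempty
  · obtain ⟨f, hf, hle⟩ := geometric_hahn_banach_of_nonempty_interior_point hC hy hint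
    exact ⟨f, fun h => hf (ContinuousLinearMap.coe_injective h), hle⟩
  -- A convex set with empty interior lies in a proper affine subspace.
  have hspan : vectorSpan ℝ C < ⊤ := by
    rw [lt_top_iff_ne_top, Ne,
      ← AffineSubspace.affineSpan_eq_top_iff_vectorSpan_eq_top_of_nontrivial,
      ← hC.interior_nonempty_iff_affineSpan_eq_top]
    exact hint
  obtain ⟨f, hf, hker⟩ := Submodule.exists_le_ker_of_lt_top _ hspan
  rcases C.eq_empty_or_nonempty with rfl | ⟨c, hc⟩
  · exact ⟨f, hf, by simp⟩
  have hconst : ∀ a ∈ C, f a = f c := fun a ha => by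
    simpa [sub_eq_zero] using hker (vsub_mem_vectorSpan ℝ ha hc)
  rcases le_total (f c) (f y) with h | h
  · exact ⟨f, hf, fun a ha => (hconst a ha).trans_le h⟩
  · exact ⟨-f, neg_ne_zero.mpr hf, fun a ha => by simpa [hconst a ha] using h⟩

lemma closure_subset_Iic_of_frontier_subset {D : Set (ℝ × ℝ)} (hDo : IsOpen D)
    (hD : IsBounded D) (hf : frontier D ⊆ Set.Iic 0) : closure D ⊆ Set.Iic 0 := by
  refine closure_minimal (fun p hp => ?_) isClosed_Iic
  obtain ⟨r, hr, hfr⟩ := hDo.exists_add_smul_mem_frontier hD hp (v := (1, 1)) (by simp)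
  have h11 : (0 : ℝ × ℝ) ≤ (1, 1) := ⟨zero_le_one, zero_le_one⟩
  exact (le_add_of_nonneg_right (smul_nonneg hr h11)).trans (hf hfr)

namespace TropPoly2

def pt (s : ℕ × ℕ) : ℝ × ℝ := ((s.1 : ℝ), (s.2 : ℝ))

/-- The pairing between the plane of exponents and the plane on which `g` is evaluated
(`ℝ × ℝ` carries the sup norm and no inner product). -/
def dot (a b : ℝ × ℝ) : ℝ := a.1 * b.1 + a.2 * b.2

lemma dot_sub_left (a b c : ℝ × ℝ) : dot (a - b) c = dot a c - dot b c := by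
  simp only [dot, Prod.fst_sub, Prod.snd_sub]; ring

lemma dot_sub_right (a b c : ℝ × ℝ) : dot a (b - c) = dot a b - dot a c := by
  simp only [dot, Prod.fst_sub, Prod.snd_sub]; ring

lemma dot_add_right (a b c : ℝ × ℝ) : dot a (b + c) = dot a b + dot a c := by
  simp only [dot, Prod.fst_add, Prod.snd_add]; ring

lemma dot_add_left (a b c : ℝ × ℝ) : dot (a + b) c = dot a c + dot b c := by
  simp only [dot, Prod.fst_add, Prod.snd_add]; ring

lemma dot_smul_left (r : ℝ) (a b : ℝ × ℝ) : dot (r • a) b = r * dot a b := by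
  simp only [dot, Prod.smul_fst, Prod.smul_snd, smul_eq_mul]; ring

lemma dot_smul_right (r : ℝ) (a b : ℝ × ℝ) : dot a (r • b) = r * dot a b := by
  simp only [dot, Prod.smul_fst, Prod.smul_snd, smul_eq_mul]; ring

lemma isLinearMap_dot_left (b : ℝ × ℝ) : IsLinearMap ℝ (dot · b) :=
  ⟨fun a a' => by simp only [dot, Prod.fst_add, Prod.snd_add]; ring,
    fun r a => by simp only [dot, Prod.smul_fst, Prod.smul_snd, smul_eq_mul]; ring⟩

lemma continuous_dot_right (a : ℝ × ℝ) : Continuous (dot a) := by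
  unfold dot; fun_prop

lemma sq_norm_le_dot_self (v : ℝ × ℝ) : ‖v‖ ^ 2 ≤ dot v v := by
  rcases max_cases ‖v.1‖ ‖v.2‖ with ⟨h, _⟩ | ⟨h, _⟩ <;>
  · rw [Prod.norm_def, h, Real.norm_eq_abs, sq_abs, dot]
    nlinarith [sq_nonneg v.1, sq_nonneg v.2]

lemma _root_.LinearMap.apply_eq_dot (f : (ℝ × ℝ) →ₗ[ℝ] ℝ) (y : ℝ × ℝ) :
    f y = dot y (f (1, 0), f (0, 1)) := by
  conv_lhs => rw [show y = y.1 • ((1 : ℝ), (0 : ℝ)) + y.2 • ((0 : ℝ), (1 : ℝ)) by ext <;> simp]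
  simp only [map_add, map_smul, smul_eq_mul, dot]

lemma exists_dot_lt_of_notMem {C : Set (ℝ × ℝ)} (hC : Convex ℝ C) (hcl : IsClosed C)
    {x : ℝ × ℝ} (hx : x ∉ C) : ∃ v, ∀ y ∈ C, dot y v < dot x v := by
  obtain ⟨f, u, hfC, hfx⟩ := geometric_hahn_banach_closed_point hC hcl hx
  have hf := (f : (ℝ × ℝ) →ₗ[ℝ] ℝ).apply_eq_dot
  simp only [ContinuousLinearMap.coe_coe] at hf
  exact ⟨_, fun y hy => by rw [← hf, ← hf]; exact (hfC y hy).trans hfx⟩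

lemma exists_ne_zero_dot_le_of_notMem_interior {C : Set (ℝ × ℝ)} (hC : Convex ℝ C)
    {y : ℝ × ℝ} (hy : y ∉ interior C) : ∃ v ≠ 0, ∀ a ∈ C, dot a v ≤ dot y v := by
  obtain ⟨f, hf, hle⟩ := exists_linearMap_ne_zero_le_of_notMem_interior hC hy
  refine ⟨(f (1, 0), f (0, 1)), fun hv => hf (LinearMap.ext fun a => ?_), fun a ha => ?_⟩
  · rw [f.apply_eq_dot, hv]; simp [dot]
  · rw [← f.apply_eq_dot, ← f.apply_eq_dot]; exact hle a ha

lemma exists_pos_mul_norm_le_dot_sub {S : Set (ℝ × ℝ)} {y : ℝ × ℝ}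
    (hy : y ∈ interior (convexHull ℝ S)) : ∃ ε > 0, ∀ v, ∃ s ∈ S, ε * ‖v‖ ≤ dot (s - y) v := by
  obtain ⟨ρ, hρ, hball⟩ := Metric.isOpen_iff.mp isOpen_interior y hy
  refine ⟨ρ / 2, by positivity, fun v => ?_⟩
  by_contra! h
  have hhalf : convexHull ℝ S ⊆ {z | dot z v < dot y v + ρ / 2 * ‖v‖} :=
    convexHull_min (fun s hs => show dot s v < _ by linarith [h s hs, dot_sub_left s y v])
      (convex_halfSpace_lt (isLinearMap_dot_left v) _)
  -- `z` is at distance `ρ / 2` from `y` in the direction `v`; for `v = 0`, `ρ / 0 = 0` gives `y`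
  set z := y + (ρ / (2 * ‖v‖)) • v
  have hz : z ∈ convexHull ℝ S := interior_subset <| hball <| by
    rcases eq_or_ne v 0 with rfl | hv
    · simpa [z] using hρ
    · rw [Metric.mem_ball, dist_eq_norm, add_sub_cancel_left, norm_smul,
        Real.norm_of_nonneg (by positivity), div_mul_eq_mul_div, mul_div_mul_right _ _
          (norm_ne_zero_iff.mpr hv)]
      linarith
  have hdot : dot y v + ρ / 2 * ‖v‖ ≤ dot z v := by
    have hsq : ρ / (2 * ‖v‖) * ‖v‖ ^ 2 = ρ / 2 * ‖v‖ := by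
      rcases eq_or_ne ‖v‖ 0 with h0 | h0
      · simp [h0]
      · field_simp
    rw [dot_add_left, dot_smul_left, ← hsq]
    gcongr
    exact sq_norm_le_dot_self v
  exact (hhalf hz).not_ge hdot

section eval

open Finset

variable (g : TropPoly2)

lemma val_eq_coeff_add_dot (s : ℕ × ℕ) (p : ℝ × ℝ) : g.val s p = g.coeff s + dot (pt s) p :=
  add_assoc _ _ _

lemma val_add_smul (s : ℕ × ℕ) (p v : ℝ × ℝ) (r : ℝ) :
    g.val s (p + r • v) = g.val s p + r * dot (pt s) v := by
  rw [val_eq_coeff_add_dot, val_eq_coeff_add_dot, dot_add_right, dot_smul_right, add_assoc]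

lemma continuous_val (s : ℕ × ℕ) : Continuous (g.val s) := by
  unfold val; fun_prop

variable {g}

def eval (hs : g.support.Nonempty) (p : ℝ × ℝ) : ℝ := g.support.sup' hs (g.val · p)

lemma val_le_eval (hs : g.support.Nonempty) {s : ℕ × ℕ} (h : s ∈ g.support) (p : ℝ × ℝ) :
    g.val s p ≤ eval hs p :=
  le_sup' (g.val · p) h

lemma continuous_eval (hs : g.support.Nonempty) : Continuous (eval hs) :=
  Continuous.finset_sup'_apply hs fun s _ => g.continuous_val s

variable (g) in
noncomputable def maximizers (p : ℝ × ℝ) : Finset (ℕ × ℕ) :=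
  g.support.filter fun u => ∀ s ∈ g.support, g.val s p ≤ g.val u p

lemma dualCell_eq_convexHull_maximizers (p : ℝ × ℝ) :
    dualCell g p = convexHull ℝ (pt '' (g.maximizers p : Set (ℕ × ℕ))) := by
  unfold dualCell
  congr 1
  ext x
  constructor
  · rintro ⟨u, hu, rfl, hmax⟩
    exact ⟨u, mem_filter.mpr ⟨hu, hmax⟩, rfl⟩
  · rintro ⟨u, hu, rfl⟩
    exact ⟨u, (mem_filter.mp hu).1, rfl, (mem_filter.mp hu).2⟩

lemma mem_maximizers_iff (hs : g.support.Nonempty) {u : ℕ × ℕ} {p : ℝ × ℝ} :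
    u ∈ g.maximizers p ↔ u ∈ g.support ∧ g.val u p = eval hs p := by
  refine ⟨fun h => ?_, fun ⟨hu, h⟩ => mem_filter.mpr ⟨hu, fun s hs' => h ▸ val_le_eval hs hs' p⟩⟩
  obtain ⟨hu, hmax⟩ := mem_filter.mp h
  exact ⟨hu, le_antisymm (val_le_eval hs hu p) (sup'_le hs _ hmax)⟩

theorem mem_dualCell_iff (hs : g.support.Nonempty) {x p : ℝ × ℝ} :
    x ∈ dualCell g p ↔ ∀ q, dot x (q - p) ≤ eval hs q - eval hs p := by
  rw [dualCell_eq_convexHull_maximizers]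
  constructor
  · refine fun hx => convexHull_min (t := {y | ∀ q, dot y (q - p) ≤ eval hs q - eval hs p})
      ?_ ?_ hx
    · rintro _ ⟨u, hu, rfl⟩ q
      obtain ⟨hu, hup⟩ := (mem_maximizers_iff hs).mp hu
      have := val_le_eval hs hu q
      rw [val_eq_coeff_add_dot] at this hup
      rw [dot_sub_right]
      linarith
    · simp only [Set.ofPred_forall]
      exact convex_iInter fun q => convex_halfSpace_le (isLinearMap_dot_left _) _
  · intro hsub
    by_contra hx
    obtain ⟨v, hv⟩ := exists_dot_lt_of_notMem (convex_convexHull ℝ _)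
      (((g.maximizers p).finite_toSet.image pt).isCompact_convexHull ℝ).isClosed hx
    -- moving `p` slightly in the direction `v` makes `g` grow slower than `dot x`
    have hdecr : ∀ᶠ r in 𝓝[>] 0, ∀ s ∈ g.support,
        (g.val s p - eval hs p) + r * (dot (pt s) v - dot x v) < 0 := by
      refine (eventually_all_finset _).mpr fun s hs' => eventually_add_mul_neg
        (by linarith [val_le_eval hs hs' p]) fun h => ?_
      have hmax : s ∈ g.maximizers p := (mem_maximizers_iff hs).mpr ⟨hs', by linarith⟩
      linarith [hv _ (subset_convexHull ℝ _ ⟨s, hmax, rfl⟩)]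
    obtain ⟨r, hr⟩ := hdecr.exists
    have hlt : eval hs (p + r • v) < eval hs p + dot x (r • v) := by
      refine (sup'_lt_iff hs).mpr fun s hs' => ?_
      rw [val_add_smul, dot_smul_right]
      linarith [hr s hs']
    have := hsub (p + r • v)
    rw [add_sub_cancel_left] at this
    linarith

end eval

section newton

open Finset

variable {g : TropPoly2}

def newton (g : TropPoly2) : Set (ℝ × ℝ) := convexHull ℝ (pt '' (g.support : Set (ℕ × ℕ)))

theorem exists_mem_dualCell_of_mem_interior {x : ℝ × ℝ} (hx : x ∈ interior (newton g)) :
    ∃ p, x ∈ dualCell g p := by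
  have hs : g.support.Nonempty := by
    by_contra h
    simp [newton, Finset.not_nonempty_iff_eq_empty.mp h] at hx
  obtain ⟨ε, hε, hdir⟩ := exists_pos_mul_norm_le_dot_sub hx
  have hgrowth : ∀ q, g.support.inf' hs g.coeff + ε * ‖q‖ ≤ eval hs q - dot x q := by
    intro q
    obtain ⟨_, ⟨s, hs', rfl⟩, hsq⟩ := hdir q
    have := val_le_eval hs hs' q
    rw [val_eq_coeff_add_dot] at this
    linarith [inf'_le g.coeff hs', dot_sub_left (pt s) x q]
  have hcoercive : Tendsto (fun q => eval hs q - dot x q) (cocompact _) atTop :=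
    tendsto_atTop_mono hgrowth <| tendsto_atTop_add_const_left _ _ <|
      tendsto_norm_cocompact_atTop.const_mul_atTop hε
  obtain ⟨p, hp⟩ := ((continuous_eval hs).sub (continuous_dot_right x)).exists_forall_le hcoercive
  refine ⟨p, (mem_dualCell_iff hs).mpr fun q => ?_⟩
  have := hp q
  simp only [Pi.sub_apply] at this
  linarith [dot_sub_right x q p]

end newton

section closedDomain

open Finset

variable (g : TropPoly2) (t : ℕ × ℕ)

def closedDomain : Set (ℝ × ℝ) := {p | ∀ s ∈ g.support, g.val s p ≤ g.val t p}

lemma isClosed_closedDomain : IsClosed (g.closedDomain t) := by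
  simp only [closedDomain, Set.ofPred_forall]
  exact isClosed_biInter fun s _ => isClosed_le (g.continuous_val s) (g.continuous_val t)

lemma isOpen_domain : IsOpen (g.domain t) := by
  simp only [domain, Set.ofPred_forall]
  refine isOpen_biInter_finset fun s _ => ?_
  rcases eq_or_ne s t with rfl | hst
  · simp
  · simpa [hst] using isOpen_lt (g.continuous_val s) (g.continuous_val t)

lemma domain_subset_closedDomain : g.domain t ⊆ g.closedDomain t := by
  intro p hp s hs
  rcases eq_or_ne s t with rfl | hst
  · exact le_rfl
  · exact (hp s hs hst).le

variable {g t}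

lemma closure_domain (hne : (g.domain t).Nonempty) : closure (g.domain t) = g.closedDomain t := by
  refine (closure_minimal (g.domain_subset_closedDomain t) (g.isClosed_closedDomain t)).antisymm
    fun p hp => ?_
  obtain ⟨p₀, hp₀⟩ := hne
  have hseg : openSegment ℝ p₀ p ⊆ g.domain t := by
    rintro _ ⟨a, b, ha, hb, hab, rfl⟩ s hs hst
    have hval : ∀ u, g.val u (a • p₀ + b • p) = a * g.val u p₀ + b * g.val u p := fun u => by
      simp only [val, Prod.fst_add, Prod.snd_add, Prod.smul_fst, Prod.smul_snd, smul_eq_mul]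
      linear_combination (g.coeff u) * hab.symm
    rw [hval, hval]
    nlinarith [hp₀ s hs hst, hp s hs]
  exact closure_mono hseg (segment_subset_closure_openSegment (right_mem_segment ℝ p₀ p))

lemma eval_eq_val_of_mem_closedDomain (ht : t ∈ g.support) {p : ℝ × ℝ}
    (hp : p ∈ g.closedDomain t) : eval ⟨t, ht⟩ p = g.val t p :=
  le_antisymm (sup'_le _ _ hp) (val_le_eval _ ht p)

lemma mem_closedDomain_of_pt_mem_dualCell (ht : t ∈ g.support) {p₀ p : ℝ × ℝ}
    (hp₀ : p₀ ∈ g.closedDomain t) (hp : pt t ∈ dualCell g p) : p ∈ g.closedDomain t := by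
  have := (mem_dualCell_iff ⟨t, ht⟩).mp hp p₀
  rw [eval_eq_val_of_mem_closedDomain ht hp₀, val_eq_coeff_add_dot, dot_sub_right] at this
  intro s hs
  linarith [val_le_eval ⟨t, ht⟩ hs p, val_eq_coeff_add_dot g t p]

lemma eventually_mem_closedDomain (ht : t ∈ g.support) (hA : (g.closedDomain t).Nonempty) :
    ∀ᶠ x in 𝓝 (pt t), ∀ p, x ∈ dualCell g p → p ∈ g.closedDomain t := by
  obtain ⟨p₀, hp₀⟩ := hA
  filter_upwards [eventually_forall_mem_imp_mem g.support.powerset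
    (C := fun S => convexHull ℝ (pt '' (S : Set (ℕ × ℕ))))
    (fun S _ => ((S.finite_toSet.image pt).isCompact_convexHull ℝ).isClosed) (pt t)]
    with x hx p hxp
  rw [dualCell_eq_convexHull_maximizers] at hxp
  refine mem_closedDomain_of_pt_mem_dualCell ht hp₀ ?_
  rw [dualCell_eq_convexHull_maximizers]
  exact hx _ (mem_powerset.mpr (filter_subset _ _)) hxp

lemma dot_sub_nonpos_of_mem_dualCell (ht : t ∈ g.support) {x p q : ℝ × ℝ}
    (hx : x ∈ dualCell g q) (hq : q ∈ g.closedDomain t) (hp : p ∈ g.closedDomain t) :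
    dot (x - pt t) (p - q) ≤ 0 := by
  have := (mem_dualCell_iff ⟨t, ht⟩).mp hx p
  rw [eval_eq_val_of_mem_closedDomain ht hp, eval_eq_val_of_mem_closedDomain ht hq,
    val_eq_coeff_add_dot, val_eq_coeff_add_dot] at this
  rw [dot_sub_left, dot_sub_right (pt t)]
  linarith

end closedDomain

section boundedness

open Finset

variable {g : TropPoly2} {t : ℕ × ℕ}

lemma isBounded_closedDomain (h : pt t ∈ interior (newton g)) :
    IsBounded (g.closedDomain t) := by
  obtain ⟨ε, hε, hdir⟩ := exists_pos_mul_norm_le_dot_sub h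
  refine isBounded_iff_forall_norm_le.mpr
    ⟨(∑ s ∈ g.support, |g.coeff t - g.coeff s|) / ε, fun p hp => ?_⟩
  obtain ⟨_, ⟨s, hs, rfl⟩, hsp⟩ := hdir p
  have hval := hp s hs
  rw [val_eq_coeff_add_dot, val_eq_coeff_add_dot] at hval
  have hterm : g.coeff t - g.coeff s ≤ ∑ s ∈ g.support, |g.coeff t - g.coeff s| :=
    (le_abs_self _).trans (single_le_sum (f := fun s => |g.coeff t - g.coeff s|)
      (fun _ _ => abs_nonneg _) hs)
  rw [le_div_iff₀ hε]
  linarith [dot_sub_left (pt s) (pt t) p]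

lemma pt_mem_interior_newton (hne : (g.domain t).Nonempty) (hb : IsBounded (g.domain t)) :
    pt t ∈ interior (newton g) := by
  by_contra h
  obtain ⟨v, hv, hle⟩ := exists_ne_zero_dot_le_of_notMem_interior (convex_convexHull ℝ _) h
  obtain ⟨p₀, hp₀⟩ := hne
  obtain ⟨r, hr, hnot⟩ := hb.exists_add_smul_notMem p₀ hv
  refine hnot fun s hs hst => ?_
  rw [val_add_smul, val_add_smul]
  have := hle (pt s) (subset_convexHull ℝ _ ⟨s, hs, rfl⟩)
  nlinarith [hp₀ s hs hst]

lemma Ksupp_subset_newton : Ksupp g ⊆ newton g :=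
  Set.iUnion₂_subset fun p _ => by
    rw [dualCell_eq_convexHull_maximizers]
    exact convexHull_mono (Set.image_mono (filter_subset _ _))

lemma pt_mem_interior_Ksupp (ht : t ∈ g.support) (hne : (g.domain t).Nonempty)
    (hb : IsBounded (g.domain t)) (hf : frontier (g.domain t) ⊆ Set.Iic 0) :
    pt t ∈ interior (Ksupp g) := by
  have hA : g.closedDomain t ⊆ Set.Iic 0 :=
    closure_domain hne ▸ closure_subset_Iic_of_frontier_subset (g.isOpen_domain t) hb hf
  rw [mem_interior_iff_mem_nhds]
  filter_upwards [isOpen_interior.mem_nhds (pt_mem_interior_newton hne hb),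
    eventually_mem_closedDomain ht (hne.mono (g.domain_subset_closedDomain t))] with x hxN hx
  obtain ⟨p, hp⟩ := exists_mem_dualCell_of_mem_interior hxN
  exact Set.mem_biUnion (hA (hx p hp)) hp

lemma frontier_domain_subset_Iic (ht : t ∈ g.support) (hne : (g.domain t).Nonempty)
    (hi : pt t ∈ interior (Ksupp g)) : frontier (g.domain t) ⊆ Set.Iic 0 := by
  intro p₀ hp₀
  have hp₀A : p₀ ∈ g.closedDomain t := closure_domain hne ▸ frontier_subset_closure hp₀
  by_contra hp₀Q
  obtain ⟨e, heQ, he⟩ : ∃ e : ℝ × ℝ, (∀ q ∈ Set.Iic (0 : ℝ × ℝ), dot e q ≤ 0) ∧ 0 < dot e p₀ := by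
    rcases not_and_or.mp hp₀Q with h | h
    · exact ⟨(1, 0), fun q hq => by simpa [dot] using hq.1, by simpa [dot] using h⟩
    · exact ⟨(0, 1), fun q hq => by simpa [dot] using hq.2, by simpa [dot] using h⟩
  have hpath : Tendsto (fun μ : ℝ => pt t + μ • e) (𝓝[>] 0) (𝓝 (pt t)) :=
    (Continuous.tendsto' (by fun_prop) 0 _ (by simp)).mono_left nhdsWithin_le_nhds
  have hev := Eventually.and (mem_interior_iff_mem_nhds.mp hi)
    (eventually_mem_closedDomain ht (hne.mono (g.domain_subset_closedDomain t)))
  obtain ⟨μ, ⟨hxK, hxA⟩, hμ⟩ := ((hpath.eventually hev).and self_mem_nhdsWithin).exists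
  obtain ⟨q, hq, hxq⟩ := Set.mem_iUnion₂.mp hxK
  have := dot_sub_nonpos_of_mem_dualCell ht hxq (hxA q hxq) hp₀A
  rw [add_sub_cancel_left, dot_smul_left, dot_sub_right] at this
  nlinarith [heQ q hq, show (0 : ℝ) < μ from hμ]

end boundedness

end TropPoly2

open TropPoly2 in
/-- Lemma 5.5 of the paper: a domain `D` of `ℝ² ∖ V(g)` is bounded (equivalently,
enclosed by a cycle of `V(g)`) if and only if the corresponding lattice point lies in
the interior of the Newton polytope of `g`; and, more generally, if `D` meets `ℝ≤0²`,
then `D` is enclosed by a cycle of `V(g) ∩ ℝ≤0²` (i.e. `D` is bounded and its boundary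
cycle lies in `ℝ≤0²`) if and only if the corresponding `0`-simplex lies in the interior
of `|K|`. -/
theorem domain_bounded_iff_interior_point (g : TropPoly2) (t : ℕ × ℕ)
    (ht : t ∈ g.support) (hne : (domain g t).Nonempty) :
    (Bornology.IsBounded (domain g t) ↔
      (((t.1 : ℝ), (t.2 : ℝ)) : ℝ × ℝ) ∈ interior (convexHull ℝ
        ((fun s : ℕ × ℕ => (((s.1 : ℝ), (s.2 : ℝ)) : ℝ × ℝ)) ''
          (g.support : Set (ℕ × ℕ))))) ∧
    ((domain g t ∩ {p : ℝ × ℝ | p.1 ≤ 0 ∧ p.2 ≤ 0}).Nonempty →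
      ((Bornology.IsBounded (domain g t) ∧
          frontier (domain g t) ⊆ {p : ℝ × ℝ | p.1 ≤ 0 ∧ p.2 ≤ 0}) ↔
        (((t.1 : ℝ), (t.2 : ℝ)) : ℝ × ℝ) ∈ interior (Ksupp g))) := by
  have hbounded : pt t ∈ interior (newton g) → IsBounded (g.domain t) := fun h =>
    (isBounded_closedDomain h).subset (g.domain_subset_closedDomain t)
  refine ⟨⟨pt_mem_interior_newton hne, hbounded⟩, fun _ => ⟨?_, fun hi => ?_⟩⟩
  · exact fun ⟨hb, hf⟩ => pt_mem_interior_Ksupp ht hne hb hf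
  · exact ⟨hbounded (interior_mono Ksupp_subset_newton hi), frontier_domain_subset_Iic ht hne hi⟩
end

section
/- Let g = ⊕_{a+b+c≤m} α_{abc} x^a y^b z^c be a tropical polynomial in three variables and let g|_{z=0} be its restriction, a tropical polynomial in two variables with coefficients α_{ab} = max(α_{ab0}, α_{ab1}, …, α_{a,b,m−a−b}). Identify (x,y) ∈ ℝ² with (x,y,0) ∈ ℝ³. Then V(g) ∩ {z = 0} = V(g|_{z=0}) ⊔ D, where D is the union of the domains of ℝ² ∖ V(g|_{z=0}) corresponding to monomials x^a y^b for which the maximum in the multiset {α_{ab0}, …, α_{a,b,m−a−b}} is attained at least twice. -/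
namespace TropPoly3

/-- The terms of `g` lying over a given two-variable exponent `(a, b)`. -/
def column (g : TropPoly3) (ab : ℕ × ℕ) : Finset (ℕ × ℕ × ℕ) :=
  g.support.filter fun t => t.1 = ab.1 ∧ t.2.1 = ab.2

/-- The support of the restriction `g|_{z=0}`. -/
def supp2 (g : TropPoly3) : Finset (ℕ × ℕ) :=
  g.support.image fun t => (t.1, t.2.1)

/-- The coefficient `α_{ab} = max (α_{ab0}, α_{ab1}, …, α_{a,b,m−a−b})` of the
restriction `g|_{z=0}`. -/
noncomputable def coeff2 (g : TropPoly3) (ab : ℕ × ℕ) : ℝ :=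
  sSup (((column g ab).image g.coeff : Finset ℝ) : Set ℝ)

/-- The value at `q ∈ ℝ²` of the term of `g|_{z=0}` with exponent `ab`. -/
noncomputable def val2 (g : TropPoly3) (ab : ℕ × ℕ) (q : ℝ × ℝ) : ℝ :=
  coeff2 g ab + (ab.1 : ℝ) * q.1 + (ab.2 : ℝ) * q.2

/-- The tropical plane curve `V(g|_{z=0}) ⊆ ℝ²`. -/
noncomputable def tropV2 (g : TropPoly3) : Set (ℝ × ℝ) :=
  {q | ∃ a ∈ supp2 g, ∃ b ∈ supp2 g, a ≠ b ∧ val2 g a q = val2 g b q ∧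
        ∀ c ∈ supp2 g, val2 g c q ≤ val2 g a q}

/-- `D`: the union of the domains of `ℝ² ∖ V(g|_{z=0})` corresponding to monomials
`x^a y^b` for which the maximum in the multiset `{α_{ab0}, …, α_{a,b,m−a−b}}` is
attained at least twice. -/
noncomputable def Dset (g : TropPoly3) : Set (ℝ × ℝ) :=
  {q | ∃ ab ∈ supp2 g,
        (∃ t ∈ column g ab, ∃ s ∈ column g ab, t ≠ s ∧
          g.coeff t = coeff2 g ab ∧ g.coeff s = coeff2 g ab) ∧
        ∀ cd ∈ supp2 g, cd ≠ ab → val2 g cd q < val2 g ab q}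

end TropPoly3

namespace TropPoly3

lemma mem_column {g : TropPoly3} {ab : ℕ × ℕ} {t : ℕ × ℕ × ℕ} :
    t ∈ column g ab ↔ t ∈ g.support ∧ t.1 = ab.1 ∧ t.2.1 = ab.2 := by
  simp [column]

lemma proj_mem_supp2 {g : TropPoly3} {t : ℕ × ℕ × ℕ} (ht : t ∈ g.support) :
    (t.1, t.2.1) ∈ supp2 g := Finset.mem_image_of_mem _ ht

lemma self_mem_column {g : TropPoly3} {t : ℕ × ℕ × ℕ} (ht : t ∈ g.support) :
    t ∈ column g (t.1, t.2.1) := mem_column.mpr ⟨ht, rfl, rfl⟩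

lemma coeff_le_coeff2 {g : TropPoly3} {ab : ℕ × ℕ} {t : ℕ × ℕ × ℕ}
    (ht : t ∈ column g ab) : g.coeff t ≤ coeff2 g ab :=
  le_csSup (Finset.bddAbove _) (by exact_mod_cast Finset.mem_image_of_mem _ ht)

lemma exists_coeff2_attained {g : TropPoly3} {ab : ℕ × ℕ} (hab : ab ∈ supp2 g) :
    ∃ t ∈ column g ab, g.coeff t = coeff2 g ab := by
  obtain ⟨u, hu, huab⟩ := Finset.mem_image.mp hab
  have hne : ((column g ab).image g.coeff).Nonempty :=
    ⟨g.coeff u, Finset.mem_image_of_mem _ (by rw [← huab]; exact self_mem_column hu)⟩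
  have := hne.csSup_mem
  rw [show sSup (((column g ab).image g.coeff : Finset ℝ) : Set ℝ) = coeff2 g ab from rfl] at this
  obtain ⟨t, ht, hc⟩ := Finset.mem_image.mp this
  exact ⟨t, ht, hc⟩

lemma val_slice {g : TropPoly3} {ab : ℕ × ℕ} {t : ℕ × ℕ × ℕ} (ht : t ∈ column g ab)
    (q : ℝ × ℝ) :
    g.val t (q.1, q.2, 0) = g.coeff t + (ab.1 : ℝ) * q.1 + (ab.2 : ℝ) * q.2 := by
  obtain ⟨_, h1, h2⟩ := mem_column.mp ht
  simp [val, h1, h2]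

lemma val_le_val2 {g : TropPoly3} {ab : ℕ × ℕ} {t : ℕ × ℕ × ℕ} (ht : t ∈ column g ab)
    (q : ℝ × ℝ) : g.val t (q.1, q.2, 0) ≤ val2 g ab q := by
  rw [val_slice ht q]
  have := coeff_le_coeff2 ht
  unfold val2; linarith

lemma exists_val2_attained {g : TropPoly3} {ab : ℕ × ℕ} (hab : ab ∈ supp2 g)
    (q : ℝ × ℝ) : ∃ t ∈ column g ab, g.val t (q.1, q.2, 0) = val2 g ab q := by
  obtain ⟨t, ht, hc⟩ := exists_coeff2_attained hab
  exact ⟨t, ht, by rw [val_slice ht q]; unfold val2; rw [hc]⟩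

end TropPoly3

open TropPoly3 in
/-- Lemma 4.4 of the paper: identifying `(x, y) ∈ ℝ²` with `(x, y, 0) ∈ ℝ³`, one has
`V(g) ∩ {z = 0} = V(g|_{z=0}) ⊔ D`. -/
theorem slice_of_tropV (m : ℕ) (g : TropPoly3)
    (hdeg : ∀ t ∈ g.support, t.1 + t.2.1 + t.2.2 ≤ m) :
    {q : ℝ × ℝ | ((q.1, q.2, (0 : ℝ)) : ℝ × ℝ × ℝ) ∈ tropV g} = tropV2 g ∪ Dset g ∧
    Disjoint (tropV2 g) (Dset g) := by
  constructor
  · ext q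
    simp only [Set.mem_setOf_eq, Set.mem_union]
    constructor
    · rintro ⟨t, ht, s, hs, hts, heq, hmax⟩
      set a : ℕ × ℕ := (t.1, t.2.1) with ha_def
      set b : ℕ × ℕ := (s.1, s.2.1) with hb_def
      have ha : a ∈ supp2 g := proj_mem_supp2 ht
      have hb : b ∈ supp2 g := proj_mem_supp2 hs
      have hta : t ∈ column g a := self_mem_column ht
      have hsb : s ∈ column g b := self_mem_column hs
      -- every val2 is ≤ the max value
      have hM : ∀ c ∈ supp2 g, val2 g c q ≤ g.val t (q.1, q.2, 0) := by
        intro c hc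
        obtain ⟨u, hu, huv⟩ := exists_val2_attained hc q
        rw [← huv]
        exact hmax u (mem_column.mp hu).1
      have hva : val2 g a q = g.val t (q.1, q.2, 0) :=
        le_antisymm (hM a ha) (val_le_val2 hta q)
      have hvb : val2 g b q = g.val t (q.1, q.2, 0) := by
        refine le_antisymm (hM b hb) ?_
        rw [heq]; exact val_le_val2 hsb q
      by_cases hab : a = b
      · -- t and s lie in the same column
        have hsb' : s ∈ column g a := by rw [hab]; exact hsb
        have hct : g.coeff t = coeff2 g a := by
          have h1 := val_slice hta q
          have h2 : val2 g a q = coeff2 g a + (a.1 : ℝ) * q.1 + (a.2 : ℝ) * q.2 := rfl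
          rw [h1, h2] at hva; linarith
        have hcs : g.coeff s = coeff2 g a := by
          have h1 := val_slice hsb' q
          have h2 : val2 g a q = coeff2 g a + (a.1 : ℝ) * q.1 + (a.2 : ℝ) * q.2 := rfl
          rw [heq, h1, h2] at hva; linarith
        by_cases hstrict : ∀ cd ∈ supp2 g, cd ≠ a → val2 g cd q < val2 g a q
        · exact Or.inr ⟨a, ha, ⟨t, hta, s, hsb', hts, hct, hcs⟩, hstrict⟩
        · push_neg at hstrict
          obtain ⟨cd, hcd, hcda, hge⟩ := hstrict
          have : val2 g cd q = val2 g a q :=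
            le_antisymm (by rw [hva]; exact hM cd hcd) hge
          exact Or.inl ⟨a, ha, cd, hcd, (Ne.symm hcda), this.symm,
            fun c hc => by rw [hva]; exact hM c hc⟩
      · exact Or.inl ⟨a, ha, b, hb, hab, by rw [hva, hvb],
          fun c hc => by rw [hva]; exact hM c hc⟩
    · rintro (⟨a, ha, b, hb, hab, heq, hmax⟩ | ⟨ab, hab, ⟨t, ht, s, hs, hts, hct, hcs⟩, hstrict⟩)
      · obtain ⟨t, ht, hvt⟩ := exists_val2_attained ha q
        obtain ⟨s, hs, hvs⟩ := exists_val2_attained hb q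
        obtain ⟨ht', ht1, ht2⟩ := mem_column.mp ht
        obtain ⟨hs', hs1, hs2⟩ := mem_column.mp hs
        refine ⟨t, ht', s, hs', ?_, by rw [hvt, hvs, heq], ?_⟩
        · rintro rfl
          exact hab (Prod.ext (ht1.symm.trans hs1) (ht2.symm.trans hs2))
        · intro u hu
          calc g.val u (q.1, q.2, 0) ≤ val2 g (u.1, u.2.1) q :=
                val_le_val2 (self_mem_column hu) q
            _ ≤ val2 g a q := hmax _ (proj_mem_supp2 hu)
            _ = g.val t (q.1, q.2, 0) := hvt.symm
      · have hvt : g.val t (q.1, q.2, 0) = val2 g ab q := by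
          rw [val_slice ht q]; unfold val2; rw [hct]
        have hvs : g.val s (q.1, q.2, 0) = val2 g ab q := by
          rw [val_slice hs q]; unfold val2; rw [hcs]
        refine ⟨t, (mem_column.mp ht).1, s, (mem_column.mp hs).1, hts,
          by rw [hvt, hvs], ?_⟩
        intro u hu
        have h1 : g.val u (q.1, q.2, 0) ≤ val2 g (u.1, u.2.1) q :=
          val_le_val2 (self_mem_column hu) q
        rw [hvt]
        by_cases hu2 : (u.1, u.2.1) = ab
        · rw [hu2] at h1; exact h1
        · exact h1.trans (hstrict _ (proj_mem_supp2 hu) hu2).le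
  · rw [Set.disjoint_left]
    rintro q ⟨a, ha, b, hb, hab, heq, hmax⟩ ⟨ab, hab2, _, hstrict⟩
    by_cases h : a = ab
    · subst h
      have := hstrict b hb (fun hba => hab hba.symm)
      rw [← heq] at this; exact lt_irrefl _ this
    · have h1 := hstrict a ha h
      have h2 := hmax ab hab2
      exact lt_irrefl _ (h1.trans_le h2)
end
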